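/- arXiv:2303.04453 — 7 statements merged into one kernel-verified Lean document; each statement's English description precedes it below -/
import Mathlib

section
/- Let 𝒳 and 𝒴 be hereditary classes of finite simple graphs and let d ∈ ℕ. Suppose 𝒴 admits an implicit representation and that every graph G ∈ 𝒳 with at least one vertex contains a non-empty vertex subset A with the following properties: (1) the subgraph of G induced by A belongs to 𝒴; (2) V(G) \ A can be partitioned into two sets B₁ and B₂ such that no edge of G joins a vertex of B₁ to a vertex of B₂; and (3) every vertex of A has at most d neighbours or at most d non-neighbours in B₁, and at most d neighbours or at most d non-neighbours in B₂. Then 𝒳 admits an implicit representation. -/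
open SimpleGraph

/-- A class of finite simple graphs, given by its members on the concrete
vertex sets `Fin n`. -/
abbrev GraphClass : Type := ∀ n : ℕ, SimpleGraph (Fin n) → Prop

/-- A class is hereditary if it is closed under induced subgraphs
(and hence under isomorphism). -/
def Hereditary (C : GraphClass) : Prop :=
  ∀ {n m : ℕ} (G : SimpleGraph (Fin n)) (H : SimpleGraph (Fin m)),
    C n G → Nonempty (H ↪g G) → C m H

/-- A class `C` admits an implicit representation: there are a constant `c` and a
decoder `D` such that every `n`-vertex graph in `C` (with `n ≥ 2`) has an injective
labeling of its vertices by labels in `Fin (n ^ c)` from which adjacency can be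
decoded by `D`. -/
def AdmitsImplicit (C : GraphClass) : Prop :=
  ∃ (c : ℕ) (D : ℕ → ℕ → Prop),
    ∀ n : ℕ, 2 ≤ n → ∀ G : SimpleGraph (Fin n), C n G →
      ∃ ℓ : Fin n → Fin (n ^ c), Function.Injective ℓ ∧
        ∀ u v : Fin n, u ≠ v → (G.Adj u v ↔ D (ℓ u).val (ℓ v).val)

/-!
Decompose a graph of `X` recursively: split off `A`, recurse into the induced subgraphs on `B₁`
and `B₂` (which lie in `X` by heredity), and order the vertices so that every node of the
resulting tree occupies an interval of positions, `A` first, then the interval of `B₁`, then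
that of `B₂`. A vertex of `A` stores the first position of its node, its label in `Y`, the two
intervals of `B₁` and `B₂` and, for each, the at most `d` positions where its adjacency differs
from the majority. For two vertices in the same `A` the decoder of `Y` answers; otherwise, if one
lies in an interval stored by the other, that one's exception list answers, and if not, the two
vertices lie in different parts `B₁`, `B₂` of some node and are non-adjacent. A label is a list
of `2d + 9` numbers bounded by `n + n ^ c`, where `n ^ c` bounds the labels for `Y`, so its
`Nat.pair` encoding is polynomial in `n`.
-/

-- The `+ 1` is the slack that the induction step needs.
theorem Encodable.encode_list_add_one_lt {M : ℕ} :
    ∀ l : List ℕ, (∀ x ∈ l, x ≤ M) → encode l + 1 < (M + 2) ^ 2 ^ l.length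
  | [], _ => by simp
  | a :: l, hl => by
    have hB := encode_list_add_one_lt l fun x hx => hl x (List.mem_cons_of_mem a hx)
    set B := (M + 2) ^ 2 ^ l.length
    have ha : a + 2 ≤ B := by
      have := hl a List.mem_cons_self
      have : M + 2 ≤ B := Nat.le_self_pow (Nat.two_pow_pos _).ne' _
      omega
    have hmax : max a (encode l) + 2 ≤ B := by omega
    have hpair := Nat.pair_lt_max_add_one_sq a (encode l)
    calc encode (a :: l) + 1 = Nat.pair a (encode l) + 2 := by simp
      _ < (max a (encode l) + 2) ^ 2 := by
        have : (max a (encode l) + 1) ^ 2 + 2 ≤ (max a (encode l) + 2) ^ 2 := by ring_nf; omega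
        omega
      _ ≤ B ^ 2 := Nat.pow_le_pow_left hmax 2
      _ = (M + 2) ^ 2 ^ (a :: l).length := by rw [← pow_mul, List.length_cons, pow_succ]

theorem Set.ncard_setOf_coe {α : Type*} (B : Set α) (P : α → Prop) :
    {b : B | P b}.ncard = {a ∈ B | P a}.ncard := by
  rw [← Set.ncard_image_of_injective _ Subtype.val_injective]
  congr 1
  ext a
  simp [and_comm]

theorem Set.Finite.exists_fin_pad {α : Type*} {d : ℕ} {P : Set α} (hP : P.Finite)
    (hcard : P.ncard ≤ d) (x : α) :
    ∃ f : Fin d → α, P ⊆ Set.range f ∧ Set.range f ⊆ insert x P := by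
  set L := hP.toFinset.toList
  have hL : L.length ≤ d := by rwa [Finset.length_toList, ← Set.ncard_eq_toFinset_card P hP]
  refine ⟨fun i => L.getD i x, fun p hp => ?_, ?_⟩
  · obtain ⟨i, hi, rfl⟩ := List.getElem_of_mem (by simpa [L] using hp : p ∈ L)
    exact ⟨⟨i, hi.trans_le hL⟩, List.getD_eq_getElem _ _ hi⟩
  · rintro _ ⟨i, rfl⟩
    rcases lt_or_ge i.val L.length with hi | hi
    · simp only [List.getD_eq_getElem _ _ hi]
      exact Or.inr ((Set.Finite.mem_toFinset hP).mp (Finset.mem_toList.mp (List.getElem_mem hi)))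
    · exact Or.inl (List.getD_eq_default _ _ hi)

def SimpleGraph.IsAdjLabelling {V α : Type*} (G : SimpleGraph V) (D : α → α → Prop)
    (ℓ : V → α) : Prop :=
  ∀ u v, u ≠ v → (G.Adj u v ↔ D (ℓ u) (ℓ v))

namespace SimpleGraph.IsAdjLabelling

variable {V W α : Type*} {G : SimpleGraph V} {H : SimpleGraph W} {D : α → α → Prop}

theorem comp_embedding {ℓ : W → α} (h : H.IsAdjLabelling D ℓ) (φ : G ↪g H) :
    G.IsAdjLabelling D (ℓ ∘ φ) := fun u v huv => by
  rw [← φ.map_adj_iff]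
  exact h _ _ (φ.injective.ne huv)

theorem of_subsingleton [Subsingleton V] (ℓ : V → α) : G.IsAdjLabelling D ℓ :=
  fun u v huv => absurd (Subsingleton.elim u v) huv

end SimpleGraph.IsAdjLabelling

namespace PartialCovering

/-- The interval `[lo, hi)` of positions of one of the parts `B₁`, `B₂` of a node, together with
the exceptional positions in it: the neighbours if `dense = false`, the non-neighbours if
`dense = true`. Unused slots of `exc` hold `hi`, which lies outside the interval. -/
structure Side (d : ℕ) where
  lo : ℕ
  hi : ℕ
  dense : Bool
  exc : Fin d → ℕ

/-- `node` is the first position of the node of the decomposition whose part `A` contains the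
vertex, `side₁` and `side₂` describe the parts `B₁` and `B₂` of that node, and `y` is the vertex's
label in the representation of `Y`. -/
structure Label (d : ℕ) where
  pos : ℕ
  node : ℕ
  y : ℕ
  side₁ : Side d
  side₂ : Side d

variable {d : ℕ} {DY : ℕ → ℕ → Prop}

namespace Side

def Sees (σ : Side d) (p : ℕ) : Prop :=
  σ.lo ≤ p ∧ p < σ.hi ∧ Xor σ.dense (p ∈ Set.range σ.exc)

def Bounded (σ : Side d) (M : ℕ) : Prop :=
  σ.lo ≤ M ∧ σ.hi ≤ M ∧ σ.dense.toNat ≤ M ∧ ∀ i, σ.exc i ≤ M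

def toList (σ : Side d) : List ℕ := σ.lo :: σ.hi :: σ.dense.toNat :: List.ofFn σ.exc

theorem toList_injective : Function.Injective (toList (d := d)) := by
  rintro ⟨lo, hi, b, e⟩ ⟨lo', hi', b', e'⟩ h
  simp only [toList, List.cons.injEq, List.ofFn_inj] at h
  obtain ⟨rfl, rfl, hb, rfl⟩ := h
  cases b <;> cases b' <;> simp_all

@[simp]
theorem length_toList (σ : Side d) : σ.toList.length = d + 3 := by simp [toList]

theorem Bounded.le_of_mem_toList {σ : Side d} {M x : ℕ} (h : σ.Bounded M)
    (hx : x ∈ σ.toList) : x ≤ M := by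
  obtain ⟨hlo, hhi, hb, he⟩ := h
  simp only [toList, List.mem_cons, List.mem_ofFn] at hx
  rcases hx with rfl | rfl | rfl | ⟨i, rfl⟩
  exacts [hlo, hhi, hb, he i]

theorem not_sees_of_lt {σ : Side d} {p : ℕ} (h : p < σ.lo) : ¬ σ.Sees p :=
  fun hs => absurd hs.1 (not_le.mpr h)

theorem not_sees_of_le {σ : Side d} {p : ℕ} (h : σ.hi ≤ p) : ¬ σ.Sees p :=
  fun hs => absurd hs.2.1 (not_lt.mpr h)

section ExceptionList

variable {W : Type*} [Finite W] {R : W → Prop} {p : W → ℕ} {lo hi : ℕ}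

theorem exists_sees_iff_of_ncard_xor_le (hp : Function.Injective p)
    (hpos : ∀ w, lo ≤ p w ∧ p w < hi) (b : Bool) (hb : {w | Xor b (R w)}.ncard ≤ d) :
    ∃ σ : Side d, σ.lo = lo ∧ σ.hi = hi ∧ (∀ i, σ.exc i ≤ hi) ∧
      ∀ w, R w ↔ σ.Sees (p w) := by
  set T := {w | Xor b (R w)}
  obtain ⟨f, hTf, hfT⟩ := (T.toFinite.image p).exists_fin_pad
    ((Set.ncard_image_le T.toFinite).trans hb) hi
  refine ⟨⟨lo, hi, b, f⟩, rfl, rfl, fun i => ?_, fun w => ?_⟩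
  · rcases hfT ⟨i, rfl⟩ with h | ⟨w, -, h⟩
    · exact h.le
    · exact h.symm.trans_le (hpos w).2.le
  · have hmem : p w ∈ Set.range f ↔ Xor b (R w) := by
      refine ⟨fun h => ?_, fun h => hTf ⟨w, h, rfl⟩⟩
      rcases hfT h with h | ⟨w', hw', h⟩
      · exact absurd h (hpos w).2.ne
      · exact hp h ▸ hw'
    simp only [Sees, hmem, (hpos w).1, (hpos w).2, true_and]
    cases b <;> simp

theorem exists_sees_iff (hp : Function.Injective p) (hpos : ∀ w, lo ≤ p w ∧ p w < hi)
    (hR : {w | R w}.ncard ≤ d ∨ {w | ¬ R w}.ncard ≤ d) :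
    ∃ σ : Side d, σ.lo = lo ∧ σ.hi = hi ∧ (∀ i, σ.exc i ≤ hi) ∧
      ∀ w, R w ↔ σ.Sees (p w) := by
  rcases hR with hR | hR
  · exact exists_sees_iff_of_ncard_xor_le hp hpos false (by simpa using hR)
  · exact exists_sees_iff_of_ncard_xor_le hp hpos true (by simpa using hR)

end ExceptionList

end Side

namespace Label

def toList (a : Label d) : List ℕ :=
  a.pos :: a.node :: a.y :: (a.side₁.toList ++ a.side₂.toList)

theorem toList_injective : Function.Injective (toList (d := d)) := by
  rintro ⟨p, n, y, s₁, s₂⟩ ⟨p', n', y', s₁', s₂'⟩ h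
  simp only [toList, List.cons.injEq] at h
  obtain ⟨rfl, rfl, rfl, h⟩ := h
  obtain ⟨h₁, h₂⟩ := List.append_inj h (by simp)
  rw [Side.toList_injective h₁, Side.toList_injective h₂]

def encode (a : Label d) : ℕ := Encodable.encode a.toList

theorem encode_injective : Function.Injective (encode (d := d)) :=
  Encodable.encode_injective.comp toList_injective

def Bounded (a : Label d) (M : ℕ) : Prop :=
  a.pos ≤ M ∧ a.node ≤ M ∧ a.y ≤ M ∧ a.side₁.Bounded M ∧ a.side₂.Bounded M

theorem Bounded.encode_lt {a : Label d} {M : ℕ} (h : a.Bounded M) :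
    a.encode < (M + 2) ^ 2 ^ (2 * d + 9) := by
  have hle : ∀ x ∈ a.toList, x ≤ M := by
    obtain ⟨hp, hn, hy, h₁, h₂⟩ := h
    simp only [toList, List.mem_cons, List.mem_append]
    rintro x (rfl | rfl | rfl | hx | hx)
    exacts [hp, hn, hy, h₁.le_of_mem_toList hx, h₂.le_of_mem_toList hx]
  have hlen : a.toList.length = 2 * d + 9 := by simp [toList]; ring
  exact hlen ▸ Nat.lt_of_succ_lt (Encodable.encode_list_add_one_lt a.toList hle)

def Sees (a b : Label d) : Prop := a.side₁.Sees b.pos ∨ a.side₂.Sees b.pos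

def Adj (DY : ℕ → ℕ → Prop) (a b : Label d) : Prop :=
  if a.node = b.node then DY a.y b.y else a.Sees b ∨ b.Sees a

def InRange (a : Label d) (lo hi : ℕ) : Prop :=
  lo ≤ a.pos ∧ a.pos < hi ∧ lo ≤ a.node ∧ a.node < hi ∧
    lo ≤ a.side₁.lo ∧ a.side₁.hi ≤ hi ∧ lo ≤ a.side₂.lo ∧ a.side₂.hi ≤ hi

variable {a b : Label d} {lo hi lo' hi' : ℕ}

theorem InRange.mono (h : a.InRange lo hi) (hlo : lo' ≤ lo) (hhi : hi ≤ hi') :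
    a.InRange lo' hi' := by
  unfold InRange at *; omega

theorem InRange.not_sees (ha : a.InRange lo hi) (hb : b.pos < lo ∨ hi ≤ b.pos) :
    ¬ a.Sees b := by
  unfold InRange at ha
  rintro (⟨h₁, h₂, -⟩ | ⟨h₁, h₂, -⟩) <;> omega

theorem adj_comm_of_node_ne (h : a.node ≠ b.node) : a.Adj DY b ↔ b.Adj DY a := by
  rw [Adj, Adj, if_neg h, if_neg (Ne.symm h), or_comm]

theorem adj_iff_of_inRange {P Q : Prop} (hb : b.InRange lo hi) (hpos : a.pos < lo)
    (hnode : a.node < lo) (hQ : Q ↔ P) (hP : P ↔ a.Sees b) :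
    (P ↔ a.Adj DY b) ∧ (Q ↔ b.Adj DY a) := by
  have hne : a.node ≠ b.node := by unfold InRange at hb; omega
  have h : P ↔ a.Adj DY b := by
    rwa [Adj, if_neg hne, or_iff_left (hb.not_sees (Or.inl hpos))]
  exact ⟨h, hQ.trans (h.trans (adj_comm_of_node_ne hne))⟩

theorem not_adj_of_inRange (ha : a.InRange lo hi) (hb : b.InRange lo' hi')
    (h : hi ≤ lo' ∨ hi' ≤ lo) : ¬ a.Adj DY b := by
  unfold InRange at ha hb
  rw [Adj, if_neg (by omega), not_or]
  exact ⟨InRange.not_sees ha (by omega), InRange.not_sees hb (by omega)⟩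

end Label

theorem exists_isAdjLabelling_of_iso {Y : GraphClass} {c : ℕ}
    (hDY : ∀ n : ℕ, 2 ≤ n → ∀ G : SimpleGraph (Fin n), Y n G →
      ∃ ℓ : Fin n → Fin (n ^ c), Function.Injective ℓ ∧
        ∀ u v : Fin n, u ≠ v → (G.Adj u v ↔ DY (ℓ u).val (ℓ v).val))
    {W : Type*} {K : SimpleGraph W} {m : ℕ} {H : SimpleGraph (Fin m)} (φ : K ≃g H)
    (hH : Y m H) : ∃ y : W → ℕ, K.IsAdjLabelling DY y ∧ ∀ w, y w ≤ m ^ c := by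
  rcases lt_or_ge m 2 with hm | hm
  · have : Subsingleton (Fin m) := Fin.subsingleton_iff_le_one.mpr (by omega)
    have : Subsingleton W := φ.injective.subsingleton
    exact ⟨0, .of_subsingleton _, fun _ => Nat.zero_le _⟩
  · obtain ⟨ℓ, -, hℓ⟩ := hDY m hm H hH
    refine ⟨fun w => ℓ (φ w), ?_, fun w => (ℓ (φ w)).isLt.le⟩
    exact SimpleGraph.IsAdjLabelling.comp_embedding (ℓ := fun v => (ℓ v).val) hℓ
      φ.toEmbedding

variable {V W : Type*}

def IsAlmostHomogeneous (G : SimpleGraph V) (d : ℕ) (v : V) (B : Set V) : Prop :=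
  {u ∈ B | G.Adj v u}.ncard ≤ d ∨ {u ∈ B | ¬ G.Adj v u}.ncard ≤ d

structure IsIntervalLabelling (DY : ℕ → ℕ → Prop) (G : SimpleGraph V) (o M : ℕ)
    (ℓ : V → Label d) : Prop where
  pos_injective : Function.Injective fun v => (ℓ v).pos
  inRange : ∀ v, (ℓ v).InRange o (o + Nat.card V)
  bounded : ∀ v, (ℓ v).Bounded M
  isAdjLabelling : G.IsAdjLabelling (Label.Adj DY) ℓ

namespace IsIntervalLabelling

variable {G : SimpleGraph V} {o M : ℕ}

theorem of_isEmpty [IsEmpty V] (ℓ : V → Label d) : IsIntervalLabelling DY G o M ℓ where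
  pos_injective := Function.injective_of_subsingleton _
  inRange := isEmptyElim
  bounded := isEmptyElim
  isAdjLabelling := .of_subsingleton ℓ

theorem comp_iso {H : SimpleGraph W} {ℓ : W → Label d} (h : IsIntervalLabelling DY H o M ℓ)
    (φ : G ≃g H) : IsIntervalLabelling DY G o M (ℓ ∘ φ) where
  pos_injective := h.pos_injective.comp φ.injective
  inRange v := Nat.card_congr φ.toEquiv ▸ h.inRange (φ v)
  bounded v := h.bounded (φ v)
  isAdjLabelling := h.isAdjLabelling.comp_embedding φ.toEmbedding

theorem exists_side {B : Set V} [Finite B] {v : V} (hv : IsAlmostHomogeneous G d v B)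
    {ℓ : B → Label d}
    (hℓ : IsIntervalLabelling DY (G.induce B) o M ℓ) :
    ∃ σ : Side d, σ.lo = o ∧ σ.hi = o + B.ncard ∧ (∀ i, σ.exc i ≤ o + B.ncard) ∧
      ∀ b : B, G.Adj v b ↔ σ.Sees (ℓ b).pos := by
  refine Side.exists_sees_iff hℓ.pos_injective (fun b => ?_) ?_
  · have := hℓ.inRange b
    rw [Nat.card_coe_set_eq] at this
    exact ⟨this.1, this.2.1⟩
  · rwa [IsAlmostHomogeneous, ← Set.ncard_setOf_coe,
      ← Set.ncard_setOf_coe B fun u => ¬ G.Adj v u] at hv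

end IsIntervalLabelling

structure Splitting (G : SimpleGraph V) (d : ℕ) where
  A : Set V
  B₁ : Set V
  B₂ : Set V
  union_eq : B₁ ∪ B₂ = Aᶜ
  disjoint : Disjoint B₁ B₂
  not_adj : ∀ u ∈ B₁, ∀ w ∈ B₂, ¬ G.Adj u w
  homogeneous₁ : ∀ v ∈ A, IsAlmostHomogeneous G d v B₁
  homogeneous₂ : ∀ v ∈ A, IsAlmostHomogeneous G d v B₂

namespace Splitting

variable {G : SimpleGraph V} (S : Splitting G d)

theorem not_mem_A_of_mem_B₁ {v : V} (hv : v ∈ S.B₁) : v ∉ S.A := by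
  simpa [← Set.mem_compl_iff, ← S.union_eq] using Or.inl hv

theorem not_mem_A_of_mem_B₂ {v : V} (hv : v ∈ S.B₂) : v ∉ S.A := by
  simpa [← Set.mem_compl_iff, ← S.union_eq] using Or.inr hv

theorem mem_B₂ {v : V} (hA : v ∉ S.A) (h₁ : v ∉ S.B₁) : v ∈ S.B₂ := by
  rw [← Set.mem_compl_iff, ← S.union_eq] at hA
  exact hA.resolve_left h₁

theorem exists_val_eq (v : V) :
    (∃ a : S.A, a.val = v) ∨ (∃ b : S.B₁, b.val = v) ∨ ∃ b : S.B₂, b.val = v := by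
  by_cases hA : v ∈ S.A
  · exact Or.inl ⟨⟨v, hA⟩, rfl⟩
  by_cases h₁ : v ∈ S.B₁
  · exact Or.inr (Or.inl ⟨⟨v, h₁⟩, rfl⟩)
  · exact Or.inr (Or.inr ⟨⟨v, S.mem_B₂ hA h₁⟩, rfl⟩)

theorem ncard_add_ncard_add_ncard [Finite V] :
    S.A.ncard + S.B₁.ncard + S.B₂.ncard = Nat.card V := by
  rw [add_assoc, ← Set.ncard_union_eq S.disjoint, S.union_eq, Set.ncard_add_ncard_compl]

section Glue

variable {α : Type*}

open Classical in
noncomputable def glue (fA : S.A → α) (f₁ : S.B₁ → α) (f₂ : S.B₂ → α) (v : V) :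
    α :=
  if hA : v ∈ S.A then fA ⟨v, hA⟩
  else if h₁ : v ∈ S.B₁ then f₁ ⟨v, h₁⟩ else f₂ ⟨v, S.mem_B₂ hA h₁⟩

variable {fA : S.A → α} {f₁ : S.B₁ → α} {f₂ : S.B₂ → α}

@[simp]
theorem glue_A (a : S.A) : S.glue fA f₁ f₂ a = fA a := dif_pos a.2

@[simp]
theorem glue_B₁ (b : S.B₁) : S.glue fA f₁ f₂ b = f₁ b := by
  rw [glue, dif_neg (S.not_mem_A_of_mem_B₁ b.2), dif_pos b.2]

@[simp]
theorem glue_B₂ (b : S.B₂) : S.glue fA f₁ f₂ b = f₂ b := by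
  rw [glue, dif_neg (S.not_mem_A_of_mem_B₂ b.2), dif_neg (Set.disjoint_right.mp S.disjoint b.2)]

theorem comp_glue {β : Type*} (g : α → β) :
    g ∘ S.glue fA f₁ f₂ = S.glue (g ∘ fA) (g ∘ f₁) (g ∘ f₂) := by
  ext v
  rcases S.exists_val_eq v with ⟨a, rfl⟩ | ⟨b, rfl⟩ | ⟨b, rfl⟩ <;> simp

theorem glue_mem {P : Set α} (hA : ∀ a, fA a ∈ P) (h₁ : ∀ b, f₁ b ∈ P)
    (h₂ : ∀ b, f₂ b ∈ P) (v : V) : S.glue fA f₁ f₂ v ∈ P := by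
  rcases S.exists_val_eq v with ⟨a, rfl⟩ | ⟨b, rfl⟩ | ⟨b, rfl⟩ <;> simp [*]

theorem glue_injective (hA : Function.Injective fA) (h₁ : Function.Injective f₁)
    (h₂ : Function.Injective f₂) (hA₁ : ∀ a b, fA a ≠ f₁ b)
    (hA₂ : ∀ a b, fA a ≠ f₂ b) (h₁₂ : ∀ b₁ b₂, f₁ b₁ ≠ f₂ b₂) :
    Function.Injective (S.glue fA f₁ f₂) := by
  intro u v huv
  rcases S.exists_val_eq u with ⟨a, rfl⟩ | ⟨b, rfl⟩ | ⟨b, rfl⟩ <;>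
  rcases S.exists_val_eq v with ⟨a', rfl⟩ | ⟨b', rfl⟩ | ⟨b', rfl⟩ <;>
  simp only [glue_A, glue_B₁, glue_B₂] at huv
  · exact congrArg _ (hA huv)
  · exact (hA₁ _ _ huv).elim
  · exact (hA₂ _ _ huv).elim
  · exact (hA₁ _ _ huv.symm).elim
  · exact congrArg _ (h₁ huv)
  · exact (h₁₂ _ _ huv).elim
  · exact (hA₂ _ _ huv.symm).elim
  · exact (h₁₂ _ _ huv.symm).elim
  · exact congrArg _ (h₂ huv)

theorem isAdjLabelling_glue {D : α → α → Prop} (hA : (G.induce S.A).IsAdjLabelling D fA)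
    (h₁ : (G.induce S.B₁).IsAdjLabelling D f₁)
    (h₂ : (G.induce S.B₂).IsAdjLabelling D f₂)
    (hA₁ : ∀ (a : S.A) (b : S.B₁),
      (G.Adj a b ↔ D (fA a) (f₁ b)) ∧ (G.Adj b a ↔ D (f₁ b) (fA a)))
    (hA₂ : ∀ (a : S.A) (b : S.B₂),
      (G.Adj a b ↔ D (fA a) (f₂ b)) ∧ (G.Adj b a ↔ D (f₂ b) (fA a)))
    (h₁₂ : ∀ b₁ b₂, ¬ D (f₁ b₁) (f₂ b₂) ∧ ¬ D (f₂ b₂) (f₁ b₁)) :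
    G.IsAdjLabelling D (S.glue fA f₁ f₂) := by
  intro u v huv
  rcases S.exists_val_eq u with ⟨a, rfl⟩ | ⟨b, rfl⟩ | ⟨b, rfl⟩ <;>
  rcases S.exists_val_eq v with ⟨a', rfl⟩ | ⟨b', rfl⟩ | ⟨b', rfl⟩ <;>
  simp only [glue_A, glue_B₁, glue_B₂]
  · exact hA a a' (ne_of_apply_ne _ huv)
  · exact (hA₁ a b').1
  · exact (hA₂ a b').1
  · exact (hA₁ a' b).2
  · exact h₁ b b' (ne_of_apply_ne _ huv)
  · exact iff_of_false (S.not_adj _ b.2 _ b'.2) (h₁₂ b b').1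
  · exact (hA₂ a' b).2
  · exact iff_of_false (fun h => S.not_adj _ b'.2 _ b.2 h.symm) (h₁₂ b' b).2
  · exact h₂ b b' (ne_of_apply_ne _ huv)

end Glue

variable [Finite V] {o M : ℕ} {ℓA : S.A → Label d} {ℓ₁ : S.B₁ → Label d}
  {ℓ₂ : S.B₂ → Label d}

theorem isIntervalLabelling_glue (hposA : ∀ a, (ℓA a).pos < o + S.A.ncard)
    (hinjA : Function.Injective fun a => (ℓA a).pos)
    (hrA : ∀ a, (ℓA a).InRange o (o + Nat.card V)) (hbA : ∀ a, (ℓA a).Bounded M)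
    (hadjA : (G.induce S.A).IsAdjLabelling (Label.Adj DY) ℓA)
    (hA₁ : ∀ (a : S.A) (b : S.B₁),
      (G.Adj a b ↔ (ℓA a).Adj DY (ℓ₁ b)) ∧ (G.Adj b a ↔ (ℓ₁ b).Adj DY (ℓA a)))
    (hA₂ : ∀ (a : S.A) (b : S.B₂),
      (G.Adj a b ↔ (ℓA a).Adj DY (ℓ₂ b)) ∧ (G.Adj b a ↔ (ℓ₂ b).Adj DY (ℓA a)))
    (h₁ : IsIntervalLabelling DY (G.induce S.B₁) (o + S.A.ncard) M ℓ₁)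
    (h₂ : IsIntervalLabelling DY (G.induce S.B₂) (o + S.A.ncard + S.B₁.ncard) M ℓ₂) :
    IsIntervalLabelling DY G o M (S.glue ℓA ℓ₁ ℓ₂) := by
  have hcard := S.ncard_add_ncard_add_ncard
  have r₁ (b) : (ℓ₁ b).InRange (o + S.A.ncard) (o + S.A.ncard + S.B₁.ncard) := by
    simpa using h₁.inRange b
  have r₂ (b) : (ℓ₂ b).InRange (o + S.A.ncard + S.B₁.ncard) (o + Nat.card V) := by
    simpa [← hcard, add_assoc] using h₂.inRange b
  refine ⟨?_, S.glue_mem (P := {a : Label d | a.InRange o (o + Nat.card V)}) hrA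
    (fun b => (r₁ b).mono (by omega) (by omega)) (fun b => (r₂ b).mono (by omega) le_rfl),
    S.glue_mem (P := {a : Label d | a.Bounded M}) hbA h₁.bounded h₂.bounded,
    S.isAdjLabelling_glue hadjA h₁.isAdjLabelling h₂.isAdjLabelling hA₁ hA₂ fun b b' =>
      ⟨Label.not_adj_of_inRange (r₁ b) (r₂ b') (Or.inl le_rfl),
        Label.not_adj_of_inRange (r₂ b') (r₁ b) (Or.inr le_rfl)⟩⟩
  rw [← Function.comp_def Label.pos, S.comp_glue]
  refine S.glue_injective hinjA h₁.pos_injective h₂.pos_injective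
    (fun a b => ?_) (fun a b => ?_) (fun b b' => ?_) <;> simp only [Function.comp_apply]
  · exact ((hposA a).trans_le (r₁ b).1).ne
  · exact ((hposA a).trans_le ((r₂ b).1.trans' (by omega))).ne
  · exact ((r₁ b).2.1.trans_le (r₂ b').1).ne

theorem exists_isIntervalLabelling (hA : S.A.Nonempty) (hM : o + Nat.card V ≤ M)
    {y : S.A → ℕ} (hy : (G.induce S.A).IsAdjLabelling DY y) (hyM : ∀ a, y a ≤ M)
    (h₁ : IsIntervalLabelling DY (G.induce S.B₁) (o + S.A.ncard) M ℓ₁)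
    (h₂ : IsIntervalLabelling DY (G.induce S.B₂) (o + S.A.ncard + S.B₁.ncard) M ℓ₂) :
    ∃ ℓ : V → Label d, IsIntervalLabelling DY G o M ℓ := by
  have hcard := S.ncard_add_ncard_add_ncard
  -- this keeps the node `o` of `A` apart from the nodes of the children, which start at `o + |A|`
  have hA₀ : 0 < S.A.ncard := hA.ncard_pos
  have r₁ (b) := h₁.inRange b
  have r₂ (b) := h₂.inRange b
  simp only [Nat.card_coe_set_eq] at r₁ r₂
  choose σ₁ hσ₁lo hσ₁hi hσ₁exc hσ₁ using
    fun a : S.A => h₁.exists_side (S.homogeneous₁ a a.2)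
  choose σ₂ hσ₂lo hσ₂hi hσ₂exc hσ₂ using
    fun a : S.A => h₂.exists_side (S.homogeneous₂ a a.2)
  let e := Finite.equivFin S.A
  have he (a) : (e a : ℕ) < S.A.ncard := by simp
  let ℓA : S.A → Label d := fun a => ⟨o + e a, o, y a, σ₁ a, σ₂ a⟩
  have hposA (a) : (ℓA a).pos < o + S.A.ncard := by simp [ℓA]
  have hinjA : Function.Injective fun a => (ℓA a).pos :=
    fun a a' h => e.injective (Fin.ext (by simpa [ℓA] using h))
  have hrA (a) : (ℓA a).InRange o (o + Nat.card V) := by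
    have := he a
    simp only [Label.InRange, ℓA, hσ₁lo, hσ₁hi, hσ₂lo, hσ₂hi]
    omega
  have hbA (a) : (ℓA a).Bounded M := by
    have := he a
    refine ⟨show o + e a ≤ M by omega, show o ≤ M by omega, hyM a, ?_, ?_⟩ <;>
      refine ⟨by simp only [ℓA, hσ₁lo, hσ₂lo]; omega,
        by simp only [ℓA, hσ₁hi, hσ₂hi]; omega,
        (Bool.toNat_le _).trans (by omega), fun i => ?_⟩
    exacts [(hσ₁exc a i).trans (by omega), (hσ₂exc a i).trans (by omega)]
  have hadjA : (G.induce S.A).IsAdjLabelling (Label.Adj DY) ℓA :=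
    fun a a' h => (hy a a' h).trans (by simp [Label.Adj, ℓA])
  have hA₁ (a : S.A) (b : S.B₁) :=
    Label.adj_iff_of_inRange (DY := DY) (r₁ b) (hposA a) (by simp [ℓA]; omega) (G.adj_comm _ _)
      ((hσ₁ a b).trans
        (or_iff_left (Side.not_sees_of_lt (by rw [hσ₂lo]; exact (r₁ b).2.1))).symm)
  have hA₂ (a : S.A) (b : S.B₂) :=
    Label.adj_iff_of_inRange (DY := DY) ((r₂ b).mono (lo' := o + S.A.ncard) (by omega) le_rfl)
      (hposA a) (by simp [ℓA]; omega) (G.adj_comm _ _)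
      ((hσ₂ a b).trans
        (or_iff_right (Side.not_sees_of_le (by rw [hσ₁hi]; exact (r₂ b).1))).symm)
  exact ⟨_, S.isIntervalLabelling_glue hposA hinjA hrA hbA hadjA hA₁ hA₂ h₁ h₂⟩

end Splitting

theorem exists_isIntervalLabelling {X : GraphClass} (hX : Hereditary X) {cY : ℕ}
    (hsplit : ∀ n : ℕ, 1 ≤ n → ∀ G : SimpleGraph (Fin n), X n G →
      ∃ S : Splitting G d, S.A.Nonempty ∧
        ∃ y : S.A → ℕ, (G.induce S.A).IsAdjLabelling DY y ∧ ∀ a, y a ≤ n ^ cY)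
    (N : ℕ) : ∀ n (G : SimpleGraph (Fin n)), X n G → ∀ o, o + n ≤ N →
      ∃ ℓ : Fin n → Label d, IsIntervalLabelling DY G o (N + N ^ cY) ℓ := by
  intro n
  induction n using Nat.strong_induction_on with
  | _ n ih =>
  intro G hG o hN
  rcases Nat.eq_zero_or_pos n with rfl | hn
  · exact ⟨isEmptyElim, .of_isEmpty _⟩
  obtain ⟨S, hA, y, hy, hyn⟩ := hsplit n hn G hG
  have hcard := S.ncard_add_ncard_add_ncard
  have hA₀ : 0 < S.A.ncard := hA.ncard_pos
  rw [Nat.card_eq_fintype_card, Fintype.card_fin] at hcard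
  have child (B : Set (Fin n)) (hB : B.ncard < n) (o' : ℕ) (hB' : o' + B.ncard ≤ N) :
      ∃ ℓ : B → Label d, IsIntervalLabelling DY (G.induce B) o' (N + N ^ cY) ℓ := by
    let φ := SimpleGraph.Iso.map (Finite.equivFin B) (G.induce B)
    have hXB : X _ ((G.induce B).map (Finite.equivFin B).toEmbedding) :=
      hX G _ hG ⟨φ.symm.toEmbedding.trans (SimpleGraph.Embedding.induce B)⟩
    obtain ⟨ℓ, hℓ⟩ := ih _ (by simpa using hB) _ hXB o' (by simpa using hB')
    exact ⟨ℓ ∘ φ, hℓ.comp_iso φ⟩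
  obtain ⟨ℓ₁, h₁⟩ := child S.B₁ (by omega) (o + S.A.ncard) (by omega)
  obtain ⟨ℓ₂, h₂⟩ := child S.B₂ (by omega) (o + S.A.ncard + S.B₁.ncard) (by omega)
  refine S.exists_isIntervalLabelling hA (by simp; omega) hy (fun a => ?_) h₁ h₂
  calc y a ≤ n ^ cY := hyn a
    _ ≤ N ^ cY := Nat.pow_le_pow_left (by omega) cY
    _ ≤ N + N ^ cY := Nat.le_add_left _ _

theorem add_pow_add_two_le {n : ℕ} (hn : 2 ≤ n) (c : ℕ) : n + n ^ c + 2 ≤ n ^ (c + 3) := by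
  have h1 : 1 ≤ n ^ c := Nat.one_le_pow _ _ (by omega)
  have h2 : 4 ≤ n ^ 2 := by nlinarith
  calc n + n ^ c + 2 ≤ 4 * (n ^ c * n) := by nlinarith
    _ ≤ n ^ 2 * (n ^ c * n) := Nat.mul_le_mul_right _ h2
    _ = n ^ (c + 3) := by ring

end PartialCovering

open PartialCovering

theorem statement2_general (X Y : GraphClass) (hX : Hereditary X) (d : ℕ)
    (hYimp : AdmitsImplicit Y)
    (hdecomp : ∀ n : ℕ, 1 ≤ n → ∀ G : SimpleGraph (Fin n), X n G →
      ∃ A : Set (Fin n), A.Nonempty ∧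
        (∃ H : SimpleGraph (Fin A.ncard), Nonempty (G.induce A ≃g H) ∧ Y A.ncard H) ∧
        ∃ B₁ B₂ : Set (Fin n), B₁ ∪ B₂ = Aᶜ ∧ Disjoint B₁ B₂ ∧
          (∀ u ∈ B₁, ∀ w ∈ B₂, ¬ G.Adj u w) ∧
          (∀ v ∈ A,
            ({u ∈ B₁ | G.Adj v u}.ncard ≤ d ∨ {u ∈ B₁ | ¬ G.Adj v u}.ncard ≤ d) ∧
            ({u ∈ B₂ | G.Adj v u}.ncard ≤ d ∨ {u ∈ B₂ | ¬ G.Adj v u}.ncard ≤ d))) :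
    AdmitsImplicit X := by
  obtain ⟨cY, DY, hDY⟩ := hYimp
  have hsplit (n : ℕ) (hn : 1 ≤ n) (G : SimpleGraph (Fin n)) (hG : X n G) :
      ∃ S : Splitting G d, S.A.Nonempty ∧
        ∃ y : S.A → ℕ, (G.induce S.A).IsAdjLabelling DY y ∧ ∀ a, y a ≤ n ^ cY := by
    obtain ⟨A, hA, ⟨H, ⟨φ⟩, hH⟩, B₁, B₂, hU, hD, hE, hdeg⟩ := hdecomp n hn G hG
    obtain ⟨y, hy, hyA⟩ := exists_isAdjLabelling_of_iso hDY φ hH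
    refine ⟨⟨A, B₁, B₂, hU, hD, hE, fun v hv => (hdeg v hv).1, fun v hv => (hdeg v hv).2⟩,
      hA, y, hy, fun a => (hyA a).trans (Nat.pow_le_pow_left ?_ cY)⟩
    simpa using Set.ncard_le_card A
  refine ⟨(cY + 3) * 2 ^ (2 * d + 9),
    Relation.Map (Label.Adj (d := d) DY) Label.encode Label.encode, ?_⟩
  intro n hn G hG
  obtain ⟨ℓ, hℓ⟩ := exists_isIntervalLabelling hX hsplit n n G hG 0 (by omega)
  have hlt (v) : (ℓ v).encode < n ^ ((cY + 3) * 2 ^ (2 * d + 9)) := by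
    rw [pow_mul]
    exact (hℓ.bounded v).encode_lt.trans_le (Nat.pow_le_pow_left (add_pow_add_two_le hn cY) _)
  refine ⟨fun v => ⟨(ℓ v).encode, hlt v⟩, fun u v huv => ?_, fun u v huv => ?_⟩
  · exact hℓ.pos_injective (congrArg Label.pos (Label.encode_injective (Fin.val_eq_of_eq huv)))
  · simpa [Relation.map_apply_apply Label.encode_injective Label.encode_injective]
      using hℓ.isAdjLabelling u v huv

/-- Theorem (partial coverings, general form): if `Y` admits an implicit representation
and every graph in the hereditary class `X` has a non-empty vertex subset `A` inducing a
graph in `Y`, whose complement splits into `B₁, B₂` with no edges between them, and every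
vertex of `A` has at most `d` neighbours or `d` non-neighbours in each of `B₁` and `B₂`,
then `X` admits an implicit representation. -/
theorem statement2 (X Y : GraphClass) (hX : Hereditary X) (hY : Hereditary Y) (d : ℕ)
    (hYimp : AdmitsImplicit Y)
    (hdecomp : ∀ n : ℕ, 1 ≤ n → ∀ G : SimpleGraph (Fin n), X n G →
      ∃ A : Set (Fin n), A.Nonempty ∧
        (∃ H : SimpleGraph (Fin A.ncard), Nonempty (G.induce A ≃g H) ∧ Y A.ncard H) ∧
        ∃ B₁ B₂ : Set (Fin n), B₁ ∪ B₂ = Aᶜ ∧ Disjoint B₁ B₂ ∧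
          (∀ u ∈ B₁, ∀ w ∈ B₂, ¬ G.Adj u w) ∧
          (∀ v ∈ A,
            ({u ∈ B₁ | G.Adj v u}.ncard ≤ d ∨ {u ∈ B₁ | ¬ G.Adj v u}.ncard ≤ d) ∧
            ({u ∈ B₂ | G.Adj v u}.ncard ≤ d ∨ {u ∈ B₂ | ¬ G.Adj v u}.ncard ≤ d))) :
    AdmitsImplicit X :=
  statement2_general X Y hX d hYimp hdecomp
end

section
/- Let k ≥ 1 and let G be a finite simple graph of contiguity at most k, i.e., there is a linear ordering v₁, …, vₙ of the vertices of G such that the neighbourhood of every vertex is the union of at most k sets of consecutive vertices in this ordering. Then every induced subgraph of G with at least two vertices contains two distinct vertices x, y whose symmetric difference in that induced subgraph is at most 2k. In particular, if G itself has at least two vertices, then G contains two distinct vertices x, y with sd(x, y) ≤ 2k. -/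
open SimpleGraph

/-- The symmetric difference of two vertices `x, y`: the number of vertices other than
`x` and `y` adjacent to exactly one of `x` and `y`. -/
noncomputable def sd {V : Type*} (G : SimpleGraph V) (x y : V) : ℕ :=
  {z : V | z ≠ x ∧ z ≠ y ∧ Xor' (G.Adj x z) (G.Adj y z)}.ncard

section SdAux

open Finset

private lemma sd_le_card_sub_two {α : Type*} [Fintype α] (H : SimpleGraph α) (x y : α) (hxy : x ≠ y) :
    sd H x y ≤ Fintype.card α - 2 := by
  classical
  have hsub : {z : α | z ≠ x ∧ z ≠ y ∧ Xor' (H.Adj x z) (H.Adj y z)} ⊆ Set.univ \ {x, y} := by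
    rintro z ⟨h1, h2, _⟩
    exact ⟨trivial, by simp [h1, h2]⟩
  calc sd H x y ≤ (Set.univ \ {x, y} : Set α).ncard :=
        Set.ncard_le_ncard hsub (Set.toFinite _)
    _ = Fintype.card α - 2 := by
        rw [Set.ncard_diff (Set.subset_univ _), Set.ncard_univ, Set.ncard_pair hxy,
          Nat.card_eq_fintype_card]

private lemma sd_univ {V : Type*} (G : SimpleGraph V) (x y : ↥(Set.univ : Set V)) :
    sd (G.induce Set.univ) x y = sd G ↑x ↑y := by
  unfold sd
  rw [← Set.ncard_image_of_injective _ (Subtype.val_injective (p := fun v => v ∈ (Set.univ : Set V)))]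
  congr 1
  ext z
  constructor
  · rintro ⟨⟨z', hz'⟩, ⟨h1, h2, h3⟩, rfl⟩
    refine ⟨fun h => h1 (Subtype.ext h), fun h => h2 (Subtype.ext h), by simpa using h3⟩
  · rintro ⟨h1, h2, h3⟩
    exact ⟨⟨z, trivial⟩, ⟨fun h => h1 (congrArg Subtype.val h),
      fun h => h2 (congrArg Subtype.val h), by simpa using h3⟩, rfl⟩

private lemma sd_core {V : Type*} [Fintype V] (k : ℕ) (hk : 1 ≤ k) (G : SimpleGraph V)
    (n : ℕ) (e : Fin n ≃ V)
    (hcont : ∀ v : V, ∃ I : Fin k → Fin n × Fin n,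
      G.neighborSet v = e '' ⋃ i : Fin k, Set.Icc (I i).1 (I i).2)
    (W : Set V) (hW : 2 ≤ W.ncard) (hbig : 2 * k + 3 ≤ W.ncard) :
    ∃ x y : W, x ≠ y ∧ sd (G.induce W) x y ≤ 2 * k := by
  classical
  set m := W.ncard with hm
  -- the set of positions of W
  set S : Finset (Fin n) := Finset.univ.filter (fun i => e i ∈ W) with hSdef
  have hS : S.card = m := by
    rw [hm, Set.ncard_eq_toFinset_card']
    apply Finset.card_bij (fun i _ => e i)
    · intro i hi
      rw [Set.mem_toFinset]
      exact (Finset.mem_filter.mp hi).2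
    · intro i hi j hj hij; exact e.injective hij
    · intro v hv
      refine ⟨e.symm v, ?_, by simp⟩
      simp only [hSdef, mem_filter, mem_univ, true_and, Equiv.apply_symm_apply]
      simpa using hv
  let P : Fin m ≃o ↥S := S.orderIsoOfFin hS
  have hPW : ∀ t : Fin m, e ((P t : Fin n)) ∈ W := by
    intro t
    exact (Finset.mem_filter.mp (P t).2).2
  let w : Fin m → ↥W := fun t => ⟨e (P t), hPW t⟩
  let pos : Fin m → ℕ := fun t => ((P t : Fin n) : ℕ)
  have hpos : StrictMono pos := by
    intro a b hab
    exact Fin.lt_iff_val_lt_val.mp (Subtype.coe_lt_coe.mpr (P.strictMono hab))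
  -- consecutive pair indices
  have hj0 : ∀ j : Fin (m - 1), (j : ℕ) < m := fun j => by have := j.2; omega
  have hj1 : ∀ j : Fin (m - 1), (j : ℕ) + 1 < m := fun j => by have := j.2; omega
  let j₀ : Fin (m - 1) → Fin m := fun j => ⟨j, hj0 j⟩
  let j₁ : Fin (m - 1) → Fin m := fun j => ⟨j + 1, hj1 j⟩
  -- the change predicate
  let chg : V → Fin (m - 1) → Prop := fun z j =>
    Xor' (G.Adj z ↑(w (j₀ j))) (G.Adj z ↑(w (j₁ j)))
  -- row bound: each vertex changes at most 2k times
  have hlt01 : ∀ j : Fin (m - 1), pos (j₀ j) < pos (j₁ j) := by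
    intro j
    exact hpos (by simp [j₀, j₁, Fin.lt_iff_val_lt_val])
  have hord : ∀ j j' : Fin (m - 1), (j : ℕ) < (j' : ℕ) → pos (j₁ j) ≤ pos (j₀ j') := by
    intro j j' h
    apply hpos.monotone
    simp only [j₀, j₁, Fin.le_def]
    omega
  have hrow : ∀ z : V, (Finset.univ.filter (fun j : Fin (m-1) => chg z j)).card ≤ 2 * k := by
    intro z
    obtain ⟨I, hI⟩ := hcont z
    have hmem : ∀ t : Fin m, G.Adj z ↑(w t) ↔
        ∃ i : Fin k, ((I i).1 : ℕ) ≤ pos t ∧ pos t ≤ ((I i).2 : ℕ) := by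
      intro t
      have h1 : G.Adj z ↑(w t) ↔ (↑(w t) : V) ∈ G.neighborSet z := by
        simp [mem_neighborSet]
      rw [h1, hI]
      constructor
      · rintro ⟨x, hx, hex⟩
        have hx' : x = (P t : Fin n) := e.injective hex
        subst hx'
        simp only [Set.mem_iUnion, Set.mem_Icc] at hx
        obtain ⟨i, hi1, hi2⟩ := hx
        exact ⟨i, Fin.le_def.mp hi1, Fin.le_def.mp hi2⟩
      · rintro ⟨i, hi1, hi2⟩
        refine ⟨(P t : Fin n), ?_, rfl⟩
        simp only [Set.mem_iUnion, Set.mem_Icc]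
        exact ⟨i, Fin.le_def.mpr hi1, Fin.le_def.mpr hi2⟩
    have hex : ∀ j : Fin (m - 1), chg z j →
        (∃ i : Fin k, pos (j₀ j) ≤ ((I i).2 : ℕ) ∧ ((I i).2 : ℕ) < pos (j₁ j)) ∨
        (∃ i : Fin k, pos (j₀ j) < ((I i).1 : ℕ) ∧ ((I i).1 : ℕ) ≤ pos (j₁ j)) := by
      intro j hc
      have hlt := hlt01 j
      rcases hc with ⟨ha, hb⟩ | ⟨ha, hb⟩
      · obtain ⟨i, hi1, hi2⟩ := (hmem _).mp ha
        left
        refine ⟨i, hi2, ?_⟩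
        by_contra hle
        push_neg at hle
        exact hb ((hmem _).mpr ⟨i, by omega, by omega⟩)
      · obtain ⟨i, hi1, hi2⟩ := (hmem _).mp ha
        right
        refine ⟨i, ?_, hi1⟩
        by_contra hle
        push_neg at hle
        exact hb ((hmem _).mpr ⟨i, by omega, by omega⟩)
    let φ : Fin (m - 1) → Fin k × Bool := fun j =>
      if h : ∃ i : Fin k, pos (j₀ j) ≤ ((I i).2 : ℕ) ∧ ((I i).2 : ℕ) < pos (j₁ j) then
        (h.choose, false)
      else if h' : ∃ i : Fin k, pos (j₀ j) < ((I i).1 : ℕ) ∧ ((I i).1 : ℕ) ≤ pos (j₁ j) then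
        (h'.choose, true)
      else (⟨0, hk⟩, false)
    have hφ : ∀ j : Fin (m - 1), chg z j →
        ((pos (j₀ j) ≤ ((I (φ j).1).2 : ℕ) ∧ ((I (φ j).1).2 : ℕ) < pos (j₁ j)) ∧ (φ j).2 = false) ∨
        ((pos (j₀ j) < ((I (φ j).1).1 : ℕ) ∧ ((I (φ j).1).1 : ℕ) ≤ pos (j₁ j)) ∧ (φ j).2 = true) := by
      intro j hc
      by_cases h : ∃ i : Fin k, pos (j₀ j) ≤ ((I i).2 : ℕ) ∧ ((I i).2 : ℕ) < pos (j₁ j)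
      · left
        simp only [φ, dif_pos h]
        exact ⟨h.choose_spec, trivial⟩
      · have h' : ∃ i : Fin k, pos (j₀ j) < ((I i).1 : ℕ) ∧ ((I i).1 : ℕ) ≤ pos (j₁ j) :=
          (hex j hc).resolve_left h
        right
        simp only [φ, dif_neg h, dif_pos h']
        exact ⟨h'.choose_spec, trivial⟩
    have key : ∀ a b : Fin (m - 1), (a : ℕ) < (b : ℕ) → chg z a → chg z b → φ a ≠ φ b := by
      intro a b hlt hca hcb heq
      have h1 := hφ a hca
      have h2 := hφ b hcb
      have hl := hord a b hlt
      rw [heq] at h1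
      rcases h1 with ⟨⟨u1, u2⟩, hb1⟩ | ⟨⟨u1, u2⟩, hb1⟩ <;>
        rcases h2 with ⟨⟨u3, u4⟩, hb2⟩ | ⟨⟨u3, u4⟩, hb2⟩
      · omega
      · rw [hb1] at hb2; simp at hb2
      · rw [hb1] at hb2; simp at hb2
      · omega
    have hinj : Set.InjOn φ ↑(Finset.univ.filter (fun j : Fin (m-1) => chg z j)) := by
      intro a ha b hb hab
      simp only [Finset.coe_filter, Set.mem_setOf_eq, Finset.mem_univ, true_and] at ha hb
      rcases Nat.lt_trichotomy (a : ℕ) (b : ℕ) with h | h | h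
      · exact absurd hab (key a b h ha hb)
      · exact Fin.ext h
      · exact absurd hab.symm (key b a h hb ha)
    calc (Finset.univ.filter (fun j : Fin (m-1) => chg z j)).card
        ≤ (Finset.univ : Finset (Fin k × Bool)).card :=
          Finset.card_le_card_of_injOn φ (fun a _ => Finset.mem_univ _) hinj
      _ = 2 * k := by simp [mul_comm]
  -- sd bound by column count
  have hcol : ∀ j : Fin (m - 1),
      sd (G.induce W) (w (j₀ j)) (w (j₁ j)) ≤
        (Finset.univ.filter (fun z : ↥W => chg ↑z j)).card := by
    intro j
    have hadj : ∀ (z : ↥W) (t : Fin m), (G.induce W).Adj (w t) z ↔ G.Adj ↑z ↑(w t) := by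
      intro z t
      rw [comap_adj]
      exact G.adj_comm _ _
    have hsub : {z : ↥W | z ≠ w (j₀ j) ∧ z ≠ w (j₁ j) ∧
        Xor' ((G.induce W).Adj (w (j₀ j)) z) ((G.induce W).Adj (w (j₁ j)) z)}
        ⊆ {z : ↥W | chg ↑z j} := by
      rintro z ⟨-, -, h3⟩
      have : Xor' (G.Adj ↑z ↑(w (j₀ j))) (G.Adj ↑z ↑(w (j₁ j))) := by
        rwa [hadj z (j₀ j), hadj z (j₁ j)] at h3
      exact this
    calc sd (G.induce W) (w (j₀ j)) (w (j₁ j))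
        ≤ {z : ↥W | chg ↑z j}.ncard := Set.ncard_le_ncard hsub (Set.toFinite _)
      _ = (Finset.univ.filter (fun z : ↥W => chg ↑z j)).card := by
          rw [Set.ncard_eq_toFinset_card']
          congr 1
          ext z
          simp
  -- sum swap and conclusion
  by_contra hcon
  push_neg at hcon
  have hne : ∀ j : Fin (m - 1), w (j₀ j) ≠ w (j₁ j) := by
    intro j h
    have : pos (j₀ j) = pos (j₁ j) := by
      have := congrArg Subtype.val h
      have h2 : (P (j₀ j) : Fin n) = (P (j₁ j) : Fin n) := e.injective this
      simp [pos, h2]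
    have hlt : pos (j₀ j) < pos (j₁ j) := hpos (by simp [j₀, j₁, Fin.lt_iff_val_lt_val])
    omega
  have hDlb : ∀ j : Fin (m - 1),
      2 * k + 1 ≤ (Finset.univ.filter (fun z : ↥W => chg ↑z j)).card := by
    intro j
    have := hcon (w (j₀ j)) (w (j₁ j)) (hne j)
    have h2 := hcol j
    omega
  have hsum1 : (m - 1) * (2 * k + 1) ≤
      ∑ j : Fin (m - 1), (Finset.univ.filter (fun z : ↥W => chg ↑z j)).card := by
    calc (m - 1) * (2 * k + 1) = ∑ _j : Fin (m - 1), (2 * k + 1) := by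
          simp [Finset.sum_const, Fintype.card_fin, mul_comm]
      _ ≤ _ := Finset.sum_le_sum (fun j _ => hDlb j)
  have hswap : ∑ j : Fin (m - 1), (Finset.univ.filter (fun z : ↥W => chg ↑z j)).card
      = ∑ z : ↥W, (Finset.univ.filter (fun j : Fin (m-1) => chg ↑z j)).card := by
    simp only [Finset.card_filter]
    exact Finset.sum_comm
  have hcardW : Fintype.card ↥W = m := by
    rw [hm, ← Nat.card_coe_set_eq, Nat.card_eq_fintype_card]
  have hsum2 : ∑ z : ↥W, (Finset.univ.filter (fun j : Fin (m-1) => chg ↑z j)).card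
      ≤ m * (2 * k) := by
    calc _ ≤ ∑ _z : ↥W, 2 * k := Finset.sum_le_sum (fun z _ => hrow ↑z)
      _ = m * (2 * k) := by simp [Finset.sum_const, hcardW]
  have hfinal : (m - 1) * (2 * k + 1) ≤ m * (2 * k) := by
    rw [hswap] at hsum1; omega
  obtain ⟨m', hm'⟩ : ∃ m', m = m' + 1 := ⟨m - 1, by omega⟩
  rw [hm'] at hfinal hbig
  simp only [Nat.add_sub_cancel] at hfinal
  nlinarith

end SdAux

/-- If `G` has contiguity at most `k`, i.e. there is a linear ordering of its vertices
(given by the bijection `e : Fin n ≃ V`) in which the neighbourhood of every vertex is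
a union of at most `k` intervals of consecutive vertices, then every induced subgraph
of `G` with at least two vertices has two distinct vertices of symmetric difference at
most `2k`; in particular so does `G` itself if it has at least two vertices. -/
theorem statement3 {V : Type*} [Fintype V] (k : ℕ) (hk : 1 ≤ k) (G : SimpleGraph V)
    (n : ℕ) (e : Fin n ≃ V)
    (hcont : ∀ v : V, ∃ I : Fin k → Fin n × Fin n,
      G.neighborSet v = e '' ⋃ i : Fin k, Set.Icc (I i).1 (I i).2) :
    (∀ W : Set V, 2 ≤ W.ncard →
      ∃ x y : W, x ≠ y ∧ sd (G.induce W) x y ≤ 2 * k) ∧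
    (2 ≤ Nat.card V → ∃ x y : V, x ≠ y ∧ sd G x y ≤ 2 * k) := by
  classical
  have part1 : ∀ W : Set V, 2 ≤ W.ncard →
      ∃ x y : W, x ≠ y ∧ sd (G.induce W) x y ≤ 2 * k := by
    intro W hW
    by_cases hbig : 2 * k + 3 ≤ W.ncard
    · exact sd_core k hk G n e hcont W hW hbig
    · push_neg at hbig
      have h1 : 1 < W.ncard := hW
      rw [Set.one_lt_ncard_iff (Set.toFinite W)] at h1
      obtain ⟨a, b, ha, hb, hab⟩ := h1
      refine ⟨⟨a, ha⟩, ⟨b, hb⟩, fun h => hab (congrArg Subtype.val h), ?_⟩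
      have hcard : Fintype.card ↥W = W.ncard := by
        rw [← Nat.card_coe_set_eq, Nat.card_eq_fintype_card]
      have := sd_le_card_sub_two (G.induce W) (⟨a, ha⟩ : ↥W) ⟨b, hb⟩
        (fun h => hab (congrArg Subtype.val h))
      omega
  refine ⟨part1, fun h2 => ?_⟩
  obtain ⟨x, y, hxy, hsd⟩ := part1 Set.univ (by rw [Set.ncard_univ]; exact h2)
  exact ⟨↑x, ↑y, fun h => hxy (Subtype.ext h), by rw [← sd_univ]; exact hsd⟩
end

section
/- Let t ≥ 2 and let G be a finite bipartite graph with bipartition (A, B) having at least one vertex, such that G contains no unbalanced induced copy of 2K_{1,t}, i.e., no induced subgraph isomorphic to the disjoint union of two stars K_{1,t} in which both star centers belong to A or both belong to B. Then G has a vertex of degree at most t − 1, or a vertex whose bi-codegree (the number of its non-neighbours in the opposite part of the bipartition) is at most (t − 1)(t² − 4t + 5). -/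
open SimpleGraph

/-- `F¹_{t,p} = 2K_{1,t}`-type graph: the disjoint union of two stars `K_{1,t}` and
`K_{1,p}` with both centers (`inl 0` and `inl 1`) in the same part of the bipartition.
The leaves of the first star are `inr b` with `b < t`, those of the second star are
`inr b` with `t ≤ b`. -/
def F1tp (t p : ℕ) : SimpleGraph (Fin 2 ⊕ Fin (t + p)) :=
  SimpleGraph.fromRel fun u v =>
    match u, v with
    | Sum.inl a, Sum.inr b => (a = 0 ∧ (b : ℕ) < t) ∨ (a = 1 ∧ t ≤ (b : ℕ))
    | _, _ => False

def embMap (t : ℕ) {V : Type*} (x y : V) (p q : Fin t → V) : Fin 2 ⊕ Fin (t + t) → V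
  | Sum.inl a => if (a : ℕ) = 0 then x else y
  | Sum.inr b => if h : (b : ℕ) < t then p ⟨b, h⟩ else q ⟨(b : ℕ) - t, by have := b.isLt; omega⟩

lemma bool3 {a b c : Bool} (h1 : a ≠ c) (h2 : b ≠ c) : a = b := by
  revert h1 h2; revert a b c; decide

lemma F1tp_adj_ll (t : ℕ) (a a' : Fin 2) : ¬ (F1tp t t).Adj (Sum.inl a) (Sum.inl a') := by
  simp [F1tp, SimpleGraph.fromRel_adj]

lemma F1tp_adj_rr (t : ℕ) (b b' : Fin (t + t)) : ¬ (F1tp t t).Adj (Sum.inr b) (Sum.inr b') := by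
  simp [F1tp, SimpleGraph.fromRel_adj]

lemma F1tp_adj_lr (t : ℕ) (a : Fin 2) (b : Fin (t + t)) :
    (F1tp t t).Adj (Sum.inl a) (Sum.inr b) ↔ (a = 0 ∧ (b : ℕ) < t) ∨ (a = 1 ∧ t ≤ (b : ℕ)) := by
  simp [F1tp, SimpleGraph.fromRel_adj]

lemma no_two_privates {V : Type*} (t : ℕ) (G : SimpleGraph V)
    (side : V → Bool) (hbip : ∀ u v : V, G.Adj u v → side u ≠ side v)
    (x y : V) (hxy : x ≠ y) (hside : side x = side y)
    (p q : Fin t → V) (hpinj : Function.Injective p) (hqinj : Function.Injective q)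
    (hp : ∀ i, G.Adj x (p i) ∧ ¬ G.Adj y (p i))
    (hq : ∀ i, G.Adj y (q i) ∧ ¬ G.Adj x (q i)) :
    ∃ f : F1tp t t ↪g G, side (f (Sum.inl 0)) = side (f (Sum.inl 1)) := by
  have hps : ∀ i, side (p i) ≠ side x := fun i => (hbip x (p i) (hp i).1).symm
  have hqs : ∀ j, side (q j) ≠ side x := fun j => by
    have := (hbip y (q j) (hq j).1).symm; rwa [← hside] at this
  have hnadj : ∀ u v : V, side u = side v → ¬ G.Adj u v := fun u v h hadj => hbip u v hadj h
  have hpx : ∀ i, p i ≠ x := fun i h => hps i (by rw [h])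
  have hpy : ∀ i, p i ≠ y := fun i h => hps i (by rw [h, ← hside])
  have hqx : ∀ j, q j ≠ x := fun j h => hqs j (by rw [h])
  have hqy : ∀ j, q j ≠ y := fun j h => hqs j (by rw [h, ← hside])
  have hpq : ∀ i j, p i ≠ q j := fun i j h => (hq j).2 (h ▸ (hp i).1)
  set f := embMap t x y p q with hf
  have hfl : ∀ a : Fin 2, f (Sum.inl a) = if (a : ℕ) = 0 then x else y := fun a => rfl
  have hfinj : Function.Injective f := by
    rintro (a | b) (a' | b') h
    · simp only [hf, embMap] at h
      split_ifs at h with h1 h2 h2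
      · exact congrArg Sum.inl (Fin.ext (by omega))
      · exact absurd h hxy
      · exact absurd h.symm hxy
      · exact congrArg Sum.inl (Fin.ext (by have := a.isLt; have := a'.isLt; omega))
    · exfalso; simp only [hf, embMap] at h
      split_ifs at h
      · exact hpx _ h.symm
      · exact hqx _ h.symm
      · exact hpy _ h.symm
      · exact hqy _ h.symm
    · exfalso; simp only [hf, embMap] at h
      split_ifs at h
      · exact hpx _ h
      · exact hpy _ h
      · exact hqx _ h
      · exact hqy _ h
    · simp only [hf, embMap] at h
      split_ifs at h with h1 h2 h2
      · have := hpinj h; exact congrArg Sum.inr (Fin.ext (by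
          have : ((⟨(b : ℕ), h1⟩ : Fin t) : ℕ) = ((⟨(b' : ℕ), h2⟩ : Fin t) : ℕ) := by rw [this]
          simpa using this))
      · exact absurd h (hpq _ _)
      · exact absurd h.symm (hpq _ _)
      · have := hqinj h
        exact congrArg Sum.inr (Fin.ext (by
          have : ((b : ℕ) - t) = ((b' : ℕ) - t) := congrArg Fin.val this
          omega))
  have hfl0 : f (Sum.inl 0) = x := by rw [hfl]; norm_num
  have hfl1 : f (Sum.inl 1) = y := by rw [hfl]; norm_num
  have hfr1 : ∀ (b : Fin (t + t)) (h : (b : ℕ) < t), f (Sum.inr b) = p ⟨(b : ℕ), h⟩ := by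
    intro b h; simp only [hf, embMap]; rw [dif_pos h]
  have hfr2 : ∀ (b : Fin (t + t)) (h : ¬ (b : ℕ) < t),
      f (Sum.inr b) = q ⟨(b : ℕ) - t, by have := b.isLt; omega⟩ := by
    intro b h; simp only [hf, embMap]; rw [dif_neg h]
  have hmain : ∀ (a : Fin 2) (b : Fin (t + t)),
      G.Adj (f (Sum.inl a)) (f (Sum.inr b)) ↔ (F1tp t t).Adj (Sum.inl a) (Sum.inr b) := by
    intro a b
    rw [F1tp_adj_lr]
    have ha : a = 0 ∨ a = 1 := by omega
    rcases ha with ha | ha <;> subst ha <;> by_cases hb : (b : ℕ) < t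
    · rw [hfl0, hfr1 b hb]
      exact iff_of_true (hp _).1 (Or.inl ⟨rfl, hb⟩)
    · rw [hfl0, hfr2 b hb]
      refine iff_of_false (hq _).2 ?_
      rintro (⟨_, h⟩ | ⟨h, _⟩)
      · exact hb h
      · exact absurd h (by decide)
    · rw [hfl1, hfr1 b hb]
      refine iff_of_false (hp _).2 ?_
      rintro (⟨h, _⟩ | ⟨_, h⟩)
      · exact absurd h (by decide)
      · omega
    · rw [hfl1, hfr2 b hb]
      exact iff_of_true (hq _).1 (Or.inr ⟨rfl, by omega⟩)
  refine ⟨⟨⟨f, hfinj⟩, ?_⟩, ?_⟩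
  · intro u v
    match u, v with
    | Sum.inl a, Sum.inl a' =>
      simp only [Function.Embedding.coeFn_mk]
      rw [iff_false_intro (F1tp_adj_ll t a a')]
      simp only [iff_false]
      rw [hfl, hfl]
      split_ifs <;> [exact hnadj x x rfl; exact hnadj x y hside;
        exact hnadj y x hside.symm; exact hnadj y y rfl]
    | Sum.inl a, Sum.inr b => exact hmain a b
    | Sum.inr b, Sum.inl a =>
      simp only [Function.Embedding.coeFn_mk]
      rw [G.adj_comm, (F1tp t t).adj_comm]
      exact hmain a b
    | Sum.inr b, Sum.inr b' =>
      simp only [Function.Embedding.coeFn_mk]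
      rw [iff_false_intro (F1tp_adj_rr t b b')]
      simp only [iff_false]
      simp only [hf, embMap]
      split_ifs <;>
        [exact hnadj _ _ (bool3 (hps _) (hps _)); exact hnadj _ _ (bool3 (hps _) (hqs _));
         exact hnadj _ _ (bool3 (hqs _) (hps _)); exact hnadj _ _ (bool3 (hqs _) (hqs _))]
  · show side (f (Sum.inl 0)) = side (f (Sum.inl 1))
    rw [hfl, hfl]
    norm_num
    exact hside

lemma arith_aux (u e s' : ℕ) (h1 : (u + 1) * (u * u + 1) ≤ s')
    (h2 : s' * (u + 2 + e) + (u + 2 + e) ≤ (u + 2 + e) * (u + 1) + s' * (u + 1)) : False := by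
  have h3 : u ≤ u * u * u := by
    rcases Nat.eq_zero_or_pos u with h | h
    · simp [h]
    · calc u = 1 * 1 * u := by ring
        _ ≤ u * u * u := Nat.mul_le_mul (Nat.mul_le_mul h h) le_rfl
  nlinarith [mul_le_mul_of_nonneg_right h1 (Nat.zero_le (e + 1)), h3,
    Nat.zero_le (u * u * e), Nat.zero_le (u * u * u * e), Nat.zero_le (u * e),
    Nat.zero_le u, Nat.zero_le e]

lemma exists_inj_of_le_card {α : Type*} [DecidableEq α] {s : Finset α} {n : ℕ}
    (h : n ≤ s.card) : ∃ p : Fin n → α, Function.Injective p ∧ ∀ i, p i ∈ s := by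
  obtain ⟨s', hsub, hcard⟩ := Finset.exists_subset_card_eq h
  let e := s'.equivFinOfCardEq hcard
  exact ⟨fun i => (e.symm i : α), fun i j hij => by
    have : e.symm i = e.symm j := Subtype.ext hij
    simpa using congrArg e this, fun i => hsub (e.symm i).2⟩

/-- Let `t ≥ 2` and let `G` be a nonempty bipartite graph with bipartition given by
`side`, containing no unbalanced induced copy of `2K_{1,t}` (both star centers on the
same side). Then `G` has a vertex of degree at most `t - 1`, or a vertex whose
bi-codegree (number of non-neighbours in the opposite part) is at most
`(t - 1)(t² - 4t + 5)`. -/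
theorem statement5 {V : Type*} [Fintype V] (t : ℕ) (ht : 2 ≤ t) (G : SimpleGraph V)
    (side : V → Bool) (hbip : ∀ u v : V, G.Adj u v → side u ≠ side v)
    (hne : Nonempty V)
    (hfree : ¬ ∃ f : F1tp t t ↪g G, side (f (Sum.inl 0)) = side (f (Sum.inl 1))) :
    (∃ v : V, (G.neighborSet v).ncard ≤ t - 1) ∨
      (∃ v : V, {u : V | side u ≠ side v ∧ ¬ G.Adj v u}.ncard
        ≤ (t - 1) * (t ^ 2 + 5 - 4 * t)) := by

  classical
  by_contra hcon
  push_neg at hcon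
  obtain ⟨hdeg0, hcod0⟩ := hcon
  set deg : V → ℕ := fun v => (Finset.univ.filter (G.Adj v)).card with hdegdef
  have hns : ∀ v : V, G.neighborSet v = ↑(Finset.univ.filter (G.Adj v)) := by
    intro v; ext w; simp [SimpleGraph.neighborSet]
  have hdeg : ∀ v, t ≤ deg v := by
    intro v
    have := hdeg0 v
    rw [hns v, Set.ncard_coe_finset] at this
    show t ≤ (Finset.univ.filter (G.Adj v)).card
    omega
  have hcod : ∀ v : V, (t - 1) * (t ^ 2 + 5 - 4 * t) <
      (Finset.univ.filter (fun u => side u ≠ side v ∧ ¬ G.Adj v u)).card := by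
    intro v
    have := hcod0 v
    have heq : {u : V | side u ≠ side v ∧ ¬ G.Adj v u}
        = ↑(Finset.univ.filter (fun u => side u ≠ side v ∧ ¬ G.Adj v u)) := by
      ext w; simp
    rw [heq, Set.ncard_coe_finset] at this
    exact this
  -- the "tournament" private-neighbour bound
  have hpriv : ∀ a b : V, a ≠ b → side a = side b → deg a ≤ deg b →
      (Finset.univ.filter (fun w => G.Adj a w ∧ ¬ G.Adj b w)).card ≤ t - 1 := by
    intro a b hab hside hdab
    by_contra hcon2
    push_neg at hcon2
    have h1 : t ≤ (Finset.univ.filter (fun w => G.Adj a w ∧ ¬ G.Adj b w)).card := by omega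
    have hsplit : ∀ u v : V, (Finset.univ.filter (fun w => G.Adj u w ∧ G.Adj v w)).card
        + (Finset.univ.filter (fun w => G.Adj u w ∧ ¬ G.Adj v w)).card = deg u := by
      intro u v
      rw [hdegdef]
      have := Finset.card_filter_add_card_filter_not
        (s := Finset.univ.filter (G.Adj u)) (p := fun w => G.Adj v w)
      rw [Finset.filter_filter, Finset.filter_filter] at this
      exact this
    have hcomm : (Finset.univ.filter (fun w => G.Adj a w ∧ G.Adj b w)).card
        = (Finset.univ.filter (fun w => G.Adj b w ∧ G.Adj a w)).card := by
      congr 1; apply Finset.filter_congr; intro w _; exact and_comm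
    have h2 : t ≤ (Finset.univ.filter (fun w => G.Adj b w ∧ ¬ G.Adj a w)).card := by
      have e1 := hsplit a b
      have e2 := hsplit b a
      omega
    obtain ⟨p, hpinj, hpmem⟩ := exists_inj_of_le_card h1
    obtain ⟨q, hqinj, hqmem⟩ := exists_inj_of_le_card h2
    refine hfree (no_two_privates t G side hbip a b hab hside p q hpinj hqinj ?_ ?_)
    · intro i; have := hpmem i; simp only [Finset.mem_filter] at this; exact this.2
    · intro j; have := hqmem j; simp only [Finset.mem_filter] at this; exact this.2
  -- choose x of maximum degree
  obtain ⟨x, -, hxmax⟩ := Finset.exists_max_image Finset.univ deg ⟨hne.some, Finset.mem_univ _⟩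
  set S : Finset V := Finset.univ.filter (fun u => side u ≠ side x ∧ ¬ G.Adj x u) with hSdef
  have hScard : (t - 1) * (t ^ 2 + 5 - 4 * t) < S.card := hcod x
  have hSne : S.Nonempty := Finset.card_pos.mp (by omega)
  obtain ⟨b0, hb0S, hb0min⟩ := Finset.exists_min_image S deg hSne
  set D : Finset V := Finset.univ.filter (G.Adj b0) with hDdef
  have hDcard : D.card = deg b0 := rfl
  have hb0side : side b0 ≠ side x := by
    have := hb0S; rw [hSdef, Finset.mem_filter] at this; exact this.2.1
  have hSside : ∀ b ∈ S, side b ≠ side x := by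
    intro b hb; rw [hSdef, Finset.mem_filter] at hb; exact hb.2.1
  have hSnadj : ∀ b ∈ S, ¬ G.Adj x b := by
    intro b hb; rw [hSdef, Finset.mem_filter] at hb; exact hb.2.2
  -- each a ∈ D has at most t-1 neighbours in S
  have hup : ∀ a ∈ D, (S.filter (fun w => G.Adj a w)).card ≤ t - 1 := by
    intro a haD
    rw [hDdef, Finset.mem_filter] at haD
    have hadj : G.Adj b0 a := haD.2
    have haside : side a = side x := bool3 (hbip b0 a hadj).symm hb0side.symm
    have hax : a ≠ x := by
      intro h; subst h; exact hSnadj b0 hb0S hadj.symm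
    have hsub : S.filter (fun w => G.Adj a w)
        ⊆ Finset.univ.filter (fun w => G.Adj a w ∧ ¬ G.Adj x w) := by
      intro w hw
      rw [Finset.mem_filter] at hw
      rw [Finset.mem_filter]
      exact ⟨Finset.mem_univ _, hw.2, hSnadj w hw.1⟩
    exact le_trans (Finset.card_le_card hsub) (hpriv a x hax haside (hxmax a (Finset.mem_univ _)))
  -- each b ∈ S, b ≠ b0, has at least deg b0 - (t-1) neighbours in D
  have hlow : ∀ b ∈ S, b ≠ b0 → deg b0 ≤ (D.filter (fun w => G.Adj b w)).card + (t - 1) := by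
    intro b hbS hbne
    have hbside : side b = side b0 := bool3 (hSside b hbS) hb0side
    have hmiss : (Finset.univ.filter (fun w => G.Adj b0 w ∧ ¬ G.Adj b w)).card ≤ t - 1 :=
      hpriv b0 b (Ne.symm hbne) hbside.symm (hb0min b hbS)
    have hsplit := Finset.card_filter_add_card_filter_not
      (s := D) (p := fun w => G.Adj b w)
    have hDsplit : (D.filter (fun w => ¬ G.Adj b w))
        = Finset.univ.filter (fun w => G.Adj b0 w ∧ ¬ G.Adj b w) := by
      rw [hDdef, Finset.filter_filter]
    rw [hDsplit] at hsplit
    rw [hDcard] at hsplit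
    omega
  -- double counting
  have hdc : ∑ b ∈ S, (D.filter (fun w => G.Adj b w)).card
      = ∑ a ∈ D, (S.filter (fun w => G.Adj a w)).card := by
    have e1 : ∀ b ∈ S, (D.filter (fun w => G.Adj b w)).card
        = ∑ a ∈ D, if G.Adj b a then 1 else 0 := by
      intro b _; exact Finset.card_filter _ _
    have e2 : ∀ a ∈ D, (S.filter (fun w => G.Adj a w)).card
        = ∑ b ∈ S, if G.Adj a b then 1 else 0 := by
      intro a _; exact Finset.card_filter _ _
    rw [Finset.sum_congr rfl e1, Finset.sum_congr rfl e2, Finset.sum_comm]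
    apply Finset.sum_congr rfl; intro a _
    apply Finset.sum_congr rfl; intro b _
    exact if_congr (G.adj_comm b a) rfl rfl
  set d := deg b0 with hd
  set s := S.card with hs
  -- upper bound
  have hU : ∑ a ∈ D, (S.filter (fun w => G.Adj a w)).card ≤ d * (t - 1) := by
    calc ∑ a ∈ D, (S.filter (fun w => G.Adj a w)).card
        ≤ D.card * (t - 1) := by
          rw [← smul_eq_mul]; exact Finset.sum_le_card_nsmul D _ _ hup
      _ = d * (t - 1) := by rw [hDcard]
  -- lower bound
  have hb0all : (D.filter (fun w => G.Adj b0 w)).card = d := by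
    rw [← hDcard]; congr 1
    apply Finset.filter_true_of_mem
    intro w hw; rw [hDdef, Finset.mem_filter] at hw; exact hw.2
  have hL : (s - 1) * d ≤ (∑ b ∈ S, (D.filter (fun w => G.Adj b w)).card - d) + (s - 1) * (t - 1) := by
    have herase : ∑ b ∈ S, (D.filter (fun w => G.Adj b w)).card
        = (∑ b ∈ S.erase b0, (D.filter (fun w => G.Adj b w)).card) + d := by
      rw [← hb0all, Finset.sum_erase_add _ _ hb0S]
    have hcard_erase : (S.erase b0).card = s - 1 := by
      rw [Finset.card_erase_of_mem hb0S]
    have hsum_low : (S.erase b0).card * d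
        ≤ (∑ b ∈ S.erase b0, (D.filter (fun w => G.Adj b w)).card) + (S.erase b0).card * (t - 1) := by
      calc (S.erase b0).card * d = ∑ _b ∈ S.erase b0, d := by
            rw [Finset.sum_const, smul_eq_mul]
        _ ≤ ∑ b ∈ S.erase b0, ((D.filter (fun w => G.Adj b w)).card + (t - 1)) := by
            apply Finset.sum_le_sum
            intro b hb
            exact hlow b (Finset.mem_of_mem_erase hb) (Finset.ne_of_mem_erase hb)
        _ = (∑ b ∈ S.erase b0, (D.filter (fun w => G.Adj b w)).card) + (S.erase b0).card * (t - 1) := by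
            rw [Finset.sum_add_distrib, Finset.sum_const, smul_eq_mul]
    rw [hcard_erase] at hsum_low
    omega
  -- combine
  have hkey : (s - 1) * d + d ≤ d * (t - 1) + (s - 1) * (t - 1) := by
    have hEd : d ≤ ∑ b ∈ S, (D.filter (fun w => G.Adj b w)).card := by
      rw [← hb0all]
      exact Finset.single_le_sum (f := fun b => (D.filter (fun w => G.Adj b w)).card)
        (fun b _ => Nat.zero_le _) hb0S
    have := hdc ▸ hU
    omega
  -- final arithmetic contradiction
  have hdt : t ≤ d := hdeg b0
  obtain ⟨u, hu⟩ : ∃ u, t = u + 2 := ⟨t - 2, by omega⟩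
  subst hu
  have hMeq : (u + 2 - 1) * ((u + 2) ^ 2 + 5 - 4 * (u + 2)) = (u + 1) * (u * u + 1) := by
    have h5 : (u + 2) ^ 2 + 5 = 4 * (u + 2) + (u * u + 1) := by ring
    rw [h5]
    have h6 : 4 * (u + 2) + (u * u + 1) - 4 * (u + 2) = u * u + 1 := by omega
    rw [h6]
    congr 1
  rw [hMeq] at hScard
  obtain ⟨e, he⟩ : ∃ e, d = u + 2 + e := ⟨d - (u + 2), by omega⟩
  have hs1 : (u + 1) * (u * u + 1) ≤ s - 1 := Nat.le_pred_of_lt hScard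
  have h21 : u + 2 - 1 = u + 1 := by omega
  rw [he, h21] at hkey
  exact arith_aux u e (s - 1) hs1 hkey
end

section
/- For every integer t ≥ 2, the class of all finite bipartite graphs that admit a bipartition (A, B) into two independent sets with no unbalanced induced copy of 2K_{1,t} (i.e., no induced subgraph isomorphic to the disjoint union of two stars K_{1,t} with both star centers in A or both in B) admits an implicit representation. -/
open SimpleGraph

namespace Stmt6

/-! ### Numeric encoding of short lists -/

def enc (l : List ℕ) : ℕ := l.foldr Nat.pair 0

def decL : ℕ → ℕ → List ℕ
  | 0, _ => []
  | k+1, x => x.unpair.1 :: decL k x.unpair.2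

lemma decL_enc : ∀ l : List ℕ, decL l.length (enc l) = l
  | [] => rfl
  | x :: l => by
      show (Nat.pair x (enc l)).unpair.1 :: decL l.length (Nat.pair x (enc l)).unpair.2 = x :: l
      rw [Nat.unpair_pair]
      exact congrArg (x :: ·) (decL_enc l)

lemma pair_lt (a b : ℕ) : Nat.pair a b < (max a b + 1)^2 := by
  unfold Nat.pair
  split
  · next h => rw [max_eq_right (le_of_lt h)]; nlinarith
  · next h => push_neg at h; rw [max_eq_left h]; nlinarith

lemma enc_lt : ∀ (l : List ℕ) (B : ℕ), (∀ x ∈ l, x ≤ B) → enc l < (B+1)^(2^l.length) := by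
  intro l
  induction l with
  | nil =>
      intro B _
      have : (0:ℕ) < (B+1)^(2^(0:ℕ)) := pow_pos (Nat.succ_pos B) _
      simpa [enc] using this
  | cons x l ih =>
      intro B h
      have hx : x ≤ B := h x (by simp)
      have he : enc l < (B+1)^(2^l.length) := ih B (fun y hy => h y (by simp [hy]))
      have hpow : (0:ℕ) < 2 ^ l.length := pow_pos (by norm_num) _
      have hB : B + 1 ≤ (B+1)^(2^l.length) := Nat.le_self_pow (by omega) _
      have h1 : max x (enc l) + 1 ≤ (B+1)^(2^l.length) := by
        rcases max_cases x (enc l) with ⟨hm, _⟩ | ⟨hm, _⟩ <;> omega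
      calc enc (x :: l) = Nat.pair x (enc l) := rfl
        _ < (max x (enc l) + 1)^2 := pair_lt _ _
        _ ≤ ((B+1)^(2^l.length))^2 := Nat.pow_le_pow_left h1 2
        _ = (B+1)^(2^(x::l).length) := by
            rw [← pow_mul, List.length_cons, pow_succ]


open Finset

variable {n : ℕ}

open Classical in
noncomputable def nbr (G : SimpleGraph (Fin n)) (v : Fin n) : Finset (Fin n) :=
  Finset.univ.filter fun w => G.Adj v w

lemma mem_nbr {G : SimpleGraph (Fin n)} {v w : Fin n} : w ∈ nbr G v ↔ G.Adj v w := by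
  classical
  rw [nbr]
  simp

noncomputable def deg (G : SimpleGraph (Fin n)) (v : Fin n) : ℕ := (nbr G v).card

noncomputable def key (G : SimpleGraph (Fin n)) (v : Fin n) : ℕ := deg G v * n + v.val

lemma deg_le (G : SimpleGraph (Fin n)) (v : Fin n) : deg G v ≤ n := by
  have := Finset.card_le_univ (nbr G v)
  simpa [deg] using this

lemma key_lt (G : SimpleGraph (Fin n)) (v : Fin n) : key G v < n*n + n := by
  have h1 := deg_le G v
  have h2 := v.isLt
  have : deg G v * n ≤ n * n := Nat.mul_le_mul_right n h1
  unfold key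
  omega

lemma key_inj {G : SimpleGraph (Fin n)} {u v : Fin n} (h : key G u = key G v) : u = v := by
  have hu : key G u % n = u.val := by
    unfold key; rw [mul_comm, Nat.mul_add_mod]; exact Nat.mod_eq_of_lt u.isLt
  have hv : key G v % n = v.val := by
    unfold key; rw [mul_comm, Nat.mul_add_mod]; exact Nat.mod_eq_of_lt v.isLt
  apply Fin.val_injective
  rw [← hu, ← hv, h]

lemma deg_le_of_key_le {G : SimpleGraph (Fin n)} {u v : Fin n} (h : key G u ≤ key G v) :
    deg G u ≤ deg G v := by
  by_contra hlt
  push_neg at hlt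
  have h1 : deg G v + 1 ≤ deg G u := hlt
  have h2 : (deg G v + 1) * n ≤ deg G u * n := Nat.mul_le_mul_right n h1
  have := v.isLt
  unfold key at h
  nlinarith

lemma bool_eq_not {x y : Bool} (h : x ≠ y) : x = !y := by
  cases x <;> cases y <;> simp_all

lemma F1tp_adj_il_ir (t p : ℕ) (a : Fin 2) (b : Fin (t+p)) :
    (F1tp t p).Adj (Sum.inl a) (Sum.inr b) ↔ ((a = 0 ∧ (b:ℕ) < t) ∨ (a = 1 ∧ t ≤ (b:ℕ))) := by
  rw [F1tp, SimpleGraph.fromRel_adj]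
  constructor
  · rintro ⟨-, h | h⟩
    · exact h
    · exact h.elim
  · intro h
    exact ⟨by simp, Or.inl h⟩

lemma F1tp_not_adj_il_il (t p : ℕ) (a a' : Fin 2) :
    ¬ (F1tp t p).Adj (Sum.inl a) (Sum.inl a') := by
  rw [F1tp, SimpleGraph.fromRel_adj]
  rintro ⟨-, h | h⟩ <;> exact h

lemma F1tp_not_adj_ir_ir (t p : ℕ) (b b' : Fin (t+p)) :
    ¬ (F1tp t p).Adj (Sum.inr b) (Sum.inr b') := by
  rw [F1tp, SimpleGraph.fromRel_adj]
  rintro ⟨-, h | h⟩ <;> exact h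

lemma oneSided {t : ℕ} (G : SimpleGraph (Fin n)) (side : Fin n → Bool)
    (hcol : ∀ u v : Fin n, G.Adj u v → side u ≠ side v)
    (hfree : ¬ ∃ f : F1tp t t ↪g G, side (f (Sum.inl 0)) = side (f (Sum.inl 1)))
    {u v : Fin n} (huv : u ≠ v) (hss : side u = side v) :
    (nbr G u \ nbr G v).card ≤ t - 1 ∨ (nbr G v \ nbr G u).card ≤ t - 1 := by
  classical
  by_contra hcon
  push_neg at hcon
  obtain ⟨h1, h2⟩ := hcon
  obtain ⟨P, hPsub, hPcard⟩ := Finset.exists_subset_card_eq (s := nbr G u \ nbr G v) (n := t) (by omega)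
  obtain ⟨Q, hQsub, hQcard⟩ := Finset.exists_subset_card_eq (s := nbr G v \ nbr G u) (n := t) (by omega)
  have hP : ∀ x ∈ P, G.Adj u x ∧ ¬ G.Adj v x := by
    intro x hx
    have := hPsub hx
    rw [Finset.mem_sdiff, mem_nbr, mem_nbr] at this
    exact this
  have hQ : ∀ x ∈ Q, G.Adj v x ∧ ¬ G.Adj u x := by
    intro x hx
    have := hQsub hx
    rw [Finset.mem_sdiff, mem_nbr, mem_nbr] at this
    exact this
  have hAdjuv : ¬ G.Adj u v := fun h => hcol u v h hss
  have hPu : ∀ x ∈ P, x ≠ u := fun x hx he => G.irrefl (he ▸ (hP x hx).1)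
  have hPv : ∀ x ∈ P, x ≠ v := fun x hx he => hAdjuv (he ▸ (hP x hx).1)
  have hQv : ∀ x ∈ Q, x ≠ v := fun x hx he => G.irrefl (he ▸ (hQ x hx).1)
  have hQu : ∀ x ∈ Q, x ≠ u := fun x hx he => hAdjuv ((he ▸ (hQ x hx).1) : G.Adj v u).symm
  have hPQ : ∀ x ∈ P, ∀ y ∈ Q, x ≠ y := by
    intro x hx y hy he
    subst he
    exact (hP x hx).2 (hQ x hy).1
  set PI := P.orderIsoOfFin hPcard with hPI
  set QI := Q.orderIsoOfFin hQcard with hQI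
  set F : Fin 2 ⊕ Fin (t + t) → Fin n :=
    Sum.elim (fun i => if i = 0 then u else v)
      (fun j => if h : (j : ℕ) < t then (PI ⟨j, h⟩ : Fin n)
               else (QI ⟨(j : ℕ) - t, by have := j.isLt; omega⟩ : Fin n)) with hF
  have eF0 : F (Sum.inl 0) = u := by simp [hF]
  have eF1 : F (Sum.inl 1) = v := by simp [hF]
  have eFP : ∀ (j : Fin (t+t)) (h : (j:ℕ) < t), F (Sum.inr j) = (PI ⟨j, h⟩ : Fin n) := by
    intro j h
    simp only [hF, Sum.elim_inr]
    rw [dif_pos h]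
  have eFQ : ∀ (j : Fin (t+t)) (h : ¬ (j:ℕ) < t),
      F (Sum.inr j) = (QI ⟨(j:ℕ) - t, by have := j.isLt; omega⟩ : Fin n) := by
    intro j h
    simp only [hF, Sum.elim_inr]
    rw [dif_neg h]
  have memFP : ∀ (j : Fin (t+t)), (j:ℕ) < t → F (Sum.inr j) ∈ P := by
    intro j h
    rw [eFP j h]
    exact (PI ⟨j, h⟩).2
  have memFQ : ∀ (j : Fin (t+t)), ¬ (j:ℕ) < t → F (Sum.inr j) ∈ Q := by
    intro j h
    rw [eFQ j h]
    exact (QI _).2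
  have fin2 : ∀ i : Fin 2, i = 0 ∨ i = 1 := by decide
  -- injectivity
  have hinj : Function.Injective F := by
    rintro (i | j) (i' | j') hxy
    · rcases fin2 i with rfl | rfl <;> rcases fin2 i' with rfl | rfl
      · rfl
      · rw [eF0, eF1] at hxy; exact absurd hxy huv
      · rw [eF0, eF1] at hxy; exact absurd hxy.symm huv
      · rfl
    · exfalso
      rcases fin2 i with rfl | rfl <;> by_cases hj : (j':ℕ) < t
      · exact hPu _ (memFP j' hj) (by rw [← eF0, hxy])
      · exact hQu _ (memFQ j' hj) (by rw [← eF0, hxy])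
      · exact hPv _ (memFP j' hj) (by rw [← eF1, hxy])
      · exact hQv _ (memFQ j' hj) (by rw [← eF1, hxy])
    · exfalso
      rcases fin2 i' with rfl | rfl <;> by_cases hj : (j:ℕ) < t
      · exact hPu _ (memFP j hj) (by rw [← eF0, ← hxy])
      · exact hQu _ (memFQ j hj) (by rw [← eF0, ← hxy])
      · exact hPv _ (memFP j hj) (by rw [← eF1, ← hxy])
      · exact hQv _ (memFQ j hj) (by rw [← eF1, ← hxy])
    · by_cases hj : (j:ℕ) < t <;> by_cases hj' : (j':ℕ) < t
      · rw [eFP j hj, eFP j' hj'] at hxy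
        have h2 : PI ⟨(j:ℕ), hj⟩ = PI ⟨(j':ℕ), hj'⟩ := Subtype.coe_injective hxy
        have h3 := PI.injective h2
        have h4 : (j:ℕ) = (j':ℕ) := by injection h3
        exact congrArg Sum.inr (Fin.ext h4)
      · exact absurd hxy (hPQ _ (memFP j hj) _ (memFQ j' hj'))
      · exact absurd hxy.symm (hPQ _ (memFP j' hj') _ (memFQ j hj))
      · rw [eFQ j hj, eFQ j' hj'] at hxy
        have h2 := QI.injective (Subtype.coe_injective hxy)
        have h4 : (j:ℕ) - t = (j':ℕ) - t := by injection h2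
        have := j.isLt; have := j'.isLt
        exact congrArg Sum.inr (Fin.ext (by omega))
  -- sides of leaves
  have hside_leaf : ∀ (j : Fin (t+t)), side (F (Sum.inr j)) = !(side u) := by
    intro j
    by_cases hj : (j:ℕ) < t
    · have hadj : G.Adj u (F (Sum.inr j)) := (hP _ (memFP j hj)).1
      exact bool_eq_not (Ne.symm (hcol u _ hadj))
    · have hadj : G.Adj v (F (Sum.inr j)) := (hQ _ (memFQ j hj)).1
      rw [bool_eq_not (Ne.symm (hcol v _ hadj)), hss]
  -- adjacency preservation for center-leaf pairs
  have hmapPQ : ∀ (i : Fin 2) (j : Fin (t+t)),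
      (G.Adj (F (Sum.inl i)) (F (Sum.inr j)) ↔ (F1tp t t).Adj (Sum.inl i) (Sum.inr j)) := by
    intro i j
    rw [F1tp_adj_il_ir]
    rcases fin2 i with rfl | rfl <;> by_cases hj : (j:ℕ) < t
    · rw [eF0]
      exact iff_of_true (hP _ (memFP j hj)).1 (Or.inl ⟨rfl, hj⟩)
    · rw [eF0]
      refine iff_of_false (hQ _ (memFQ j hj)).2 ?_
      rintro (⟨-, h⟩ | ⟨h0, -⟩)
      · exact hj h
      · exact absurd h0 (by decide)
    · rw [eF1]
      refine iff_of_false (hP _ (memFP j hj)).2 ?_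
      rintro (⟨h0, -⟩ | ⟨-, h⟩)
      · exact absurd h0 (by decide)
      · omega
    · rw [eF1]
      exact iff_of_true (hQ _ (memFQ j hj)).1 (Or.inr ⟨rfl, by omega⟩)
  have hmap : ∀ a b, (G.Adj (F a) (F b) ↔ (F1tp t t).Adj a b) := by
    rintro (i | j) (i' | j')
    · refine iff_of_false ?_ (F1tp_not_adj_il_il t t i i')
      rcases fin2 i with rfl | rfl <;> rcases fin2 i' with rfl | rfl <;>
        simp only [eF0, eF1]
      · exact G.irrefl
      · exact hAdjuv
      · exact fun h => hAdjuv h.symm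
      · exact G.irrefl
    · exact hmapPQ i j'
    · constructor
      · intro h; exact ((hmapPQ i' j).mp h.symm).symm
      · intro h; exact ((hmapPQ i' j).mpr h.symm).symm
    · refine iff_of_false ?_ (F1tp_not_adj_ir_ir t t j j')
      intro h
      exact hcol _ _ h (by rw [hside_leaf j, hside_leaf j'])
  exact hfree ⟨⟨⟨F, hinj⟩, fun {a b} => hmap a b⟩, by
    show side (F (Sum.inl 0)) = side (F (Sum.inl 1))
    rw [eF0, eF1]; exact hss⟩

lemma degNested {t : ℕ} (G : SimpleGraph (Fin n)) (side : Fin n → Bool)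
    (hcol : ∀ u v : Fin n, G.Adj u v → side u ≠ side v)
    (hfree : ¬ ∃ f : F1tp t t ↪g G, side (f (Sum.inl 0)) = side (f (Sum.inl 1)))
    {u v : Fin n} (huv : u ≠ v) (hss : side u = side v) (hdeg : deg G u ≤ deg G v) :
    (nbr G u \ nbr G v).card ≤ t - 1 := by
  rcases oneSided G side hcol hfree huv hss with h | h
  · exact h
  by_contra hbig
  push_neg at hbig
  have e1 : (nbr G v ∩ nbr G u).card + (nbr G v \ nbr G u).card = deg G v :=
    Finset.card_inter_add_card_sdiff _ _
  have e2 : (nbr G u ∩ nbr G v).card + (nbr G u \ nbr G v).card = deg G u :=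
    Finset.card_inter_add_card_sdiff _ _
  have e3 : (nbr G v ∩ nbr G u).card = (nbr G u ∩ nbr G v).card := by
    rw [Finset.inter_comm]
  omega

/-! ### The chain threshold function and exception sets -/

open Classical in
noncomputable def Mset (G : SimpleGraph (Fin n)) (side : Fin n → Bool) (b : Fin n) (κ : ℕ) :
    Finset (Fin n) :=
  Finset.univ.filter fun a' => side a' = false ∧ κ ≤ key G a' ∧ ¬ G.Adj a' b

lemma mem_Mset {G : SimpleGraph (Fin n)} {side : Fin n → Bool} {b : Fin n} {κ : ℕ} {x : Fin n} :
    x ∈ Mset G side b κ ↔ (side x = false ∧ κ ≤ key G x ∧ ¬ G.Adj x b) := by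
  classical
  rw [Mset]
  simp

open Classical in
noncomputable def Wset (G : SimpleGraph (Fin n)) (side : Fin n → Bool) (s : ℕ) (b : Fin n) :
    Finset (Fin n) :=
  Finset.univ.filter fun a₀ => side a₀ = false ∧ G.Adj a₀ b ∧ (Mset G side b (key G a₀)).card ≤ s

lemma mem_Wset {G : SimpleGraph (Fin n)} {side : Fin n → Bool} {s : ℕ} {b x : Fin n} :
    x ∈ Wset G side s b ↔ (side x = false ∧ G.Adj x b ∧ (Mset G side b (key G x)).card ≤ s) := by
  classical
  rw [Wset]
  simp

open Classical in
noncomputable def theta (G : SimpleGraph (Fin n)) (side : Fin n → Bool) (s : ℕ) (b : Fin n) : ℕ :=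
  if h : (Wset G side s b).Nonempty then ((Wset G side s b).image (key G)).min' (h.image _)
  else n*n + n

lemma theta_le {G : SimpleGraph (Fin n)} {side : Fin n → Bool} {s : ℕ} {b a₀ : Fin n}
    (h : a₀ ∈ Wset G side s b) : theta G side s b ≤ key G a₀ := by
  rw [theta, dif_pos ⟨a₀, h⟩]
  exact Finset.min'_le _ _ (Finset.mem_image_of_mem _ h)

lemma theta_wit {G : SimpleGraph (Fin n)} {side : Fin n → Bool} {s : ℕ} {b : Fin n} {K : ℕ}
    (hK : K < n*n + n) (h : theta G side s b ≤ K) :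
    ∃ a₀ ∈ Wset G side s b, key G a₀ ≤ K := by
  rw [theta] at h
  split_ifs at h with hw
  · obtain ⟨a₀, ha₀, hk⟩ := Finset.mem_image.mp
      (Finset.min'_mem ((Wset G side s b).image (key G)) (hw.image _))
    exact ⟨a₀, ha₀, hk ▸ h⟩
  · omega

lemma theta_le_top (G : SimpleGraph (Fin n)) (side : Fin n → Bool) (s : ℕ) (b : Fin n) :
    theta G side s b ≤ n*n + n := by
  rw [theta]
  split_ifs with hw
  · obtain ⟨a₀, _, hk⟩ := Finset.mem_image.mp
      (Finset.min'_mem ((Wset G side s b).image (key G)) (hw.image _))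
    exact hk ▸ (key_lt G a₀).le
  · exact le_refl _

open Classical in
noncomputable def Exc (G : SimpleGraph (Fin n)) (side : Fin n → Bool) (s : ℕ) (a : Fin n) :
    Finset (Fin n) :=
  Finset.univ.filter fun b => side b = true ∧ ¬ (G.Adj a b ↔ theta G side s b ≤ key G a)

lemma mem_Exc {G : SimpleGraph (Fin n)} {side : Fin n → Bool} {s : ℕ} {a b : Fin n} :
    b ∈ Exc G side s a ↔ (side b = true ∧ ¬ (G.Adj a b ↔ theta G side s b ≤ key G a)) := by
  classical
  rw [Exc]
  simp

/-- extract the top `k` elements of a finset with respect to an injective weight -/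
lemma exists_topK {α : Type*} [DecidableEq α] :
    ∀ (k : ℕ) (L : Finset α) (f : α → ℕ), (∀ x ∈ L, ∀ y ∈ L, f x = f y → x = y) →
    k ≤ L.card → ∃ J, J ⊆ L ∧ J.card = k ∧ ∀ x ∈ L, x ∉ J → ∀ j ∈ J, f x < f j := by
  intro k
  induction k with
  | zero => exact fun L f _ _ => ⟨∅, by simp⟩
  | succ k ih =>
      intro L f hinj hk
      have hne : L.Nonempty := Finset.card_pos.mp (by omega)
      obtain ⟨m, hm, hmax⟩ := Finset.exists_max_image L f hne
      obtain ⟨J', hJ'sub, hJ'card, hJ'prop⟩ := ih (L.erase m) f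
        (fun x hx y hy => hinj x (Finset.erase_subset _ _ hx) y (Finset.erase_subset _ _ hy))
        (by rw [Finset.card_erase_of_mem hm]; omega)
      have hmJ' : m ∉ J' := fun h => (Finset.mem_erase.mp (hJ'sub h)).1 rfl
      refine ⟨insert m J', ?_, ?_, ?_⟩
      · exact Finset.insert_subset hm (hJ'sub.trans (Finset.erase_subset _ _))
      · rw [Finset.card_insert_of_notMem hmJ', hJ'card]
      · intro x hx hxJ j hj
        have hxm : x ≠ m := fun he => hxJ (he ▸ Finset.mem_insert_self _ _)
        rcases Finset.mem_insert.mp hj with rfl | hj'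
        · exact lt_of_le_of_ne (hmax x hx) (fun he => hxm (hinj x hx j hm he))
        · exact hJ'prop x (Finset.mem_erase.mpr ⟨hxm, hx⟩)
            (fun h => hxJ (Finset.mem_insert_of_mem h)) j hj'

section Bounds

variable {t : ℕ} {G : SimpleGraph (Fin n)} {side : Fin n → Bool}

open Classical in
lemma E2_bound (ht : 2 ≤ t)
    (hcol : ∀ u v : Fin n, G.Adj u v → side u ≠ side v)
    (hfree : ¬ ∃ f : F1tp t t ↪g G, side (f (Sum.inl 0)) = side (f (Sum.inl 1)))
    (a : Fin n) (ha : side a = false) :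
    ((Exc G side (t-1) a).filter fun b => ¬ G.Adj a b).card ≤ t * (t-1) := by
  classical
  set s := t - 1 with hs
  set L : Finset (Fin n) := Finset.univ.filter (fun x => side x = false ∧ key G x < key G a)
    with hL
  have memL : ∀ x, x ∈ L ↔ (side x = false ∧ key G x < key G a) := by
    intro x; rw [hL]; simp
  have hkeyinjL : ∀ x ∈ L, ∀ y ∈ L, key G x = key G y → x = y := fun x _ y _ h => key_inj h
  obtain ⟨J, hJsub, hJcard, hJtop⟩ :=
    exists_topK (min (s+1) L.card) L (key G) hkeyinjL (min_le_right _ _)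
  have haL : a ∉ L := fun h => by have := (memL a).mp h; omega
  have haJ : a ∉ J := fun h => haL (hJsub h)
  -- every bad b is adjacent to some member of J
  have hcover : ∀ b, b ∈ (Exc G side s a).filter (fun b => ¬ G.Adj a b) →
      ∃ j ∈ J, b ∈ nbr G j \ nbr G a := by
    intro b hb
    rw [Finset.mem_filter] at hb
    obtain ⟨hbE, hnadj⟩ := hb
    rw [mem_Exc] at hbE
    obtain ⟨hbtrue, hbiff⟩ := hbE
    have hth : theta G side s b ≤ key G a := by
      by_contra hth
      exact hbiff (iff_of_false hnadj hth)
    obtain ⟨w, hwW, hwle⟩ := theta_wit (key_lt G a) hth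
    rw [mem_Wset] at hwW
    obtain ⟨hwside, hwadj, hwM⟩ := hwW
    have hwa : w ≠ a := fun he => hnadj (he ▸ hwadj)
    have hwlt : key G w < key G a := lt_of_le_of_ne hwle (fun he => hwa (key_inj he))
    have hwL : w ∈ L := (memL w).mpr ⟨hwside, hwlt⟩
    by_cases hwJ : w ∈ J
    · exact ⟨w, hwJ, Finset.mem_sdiff.mpr ⟨mem_nbr.mpr hwadj, fun h => hnadj (mem_nbr.mp h)⟩⟩
    · -- J is the full top (s+1) set
      have hJfull : J.card = s + 1 := by
        have hJL : J ≠ L := fun he => hwJ (he ▸ hwL)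
        have : J.card < L.card := Finset.card_lt_card (lt_of_le_of_ne hJsub hJL)
        omega
      -- some j ∈ J must be adjacent to b
      by_contra hno
      push_neg at hno
      have hnoJ : ∀ j ∈ J, ¬ G.Adj j b := by
        intro j hj hadj
        exact absurd (Finset.mem_sdiff.mpr ⟨mem_nbr.mpr hadj, fun h => hnadj (mem_nbr.mp h)⟩)
          (fun hmem => by have := hno j hj; exact this hmem)
      have hsub : insert a J ⊆ Mset G side b (key G w) := by
        intro x hx
        rcases Finset.mem_insert.mp hx with rfl | hxJ
        · exact mem_Mset.mpr ⟨ha, hwle, hnadj⟩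
        · have hxL := hJsub hxJ
          have hxside := ((memL x).mp hxL).1
          have hxkey : key G w < key G x := hJtop w hwL hwJ x hxJ
          exact mem_Mset.mpr ⟨hxside, hxkey.le, hnoJ x hxJ⟩
      have hcard2 : s + 2 ≤ (Mset G side b (key G w)).card := by
        have h1 : (insert a J).card = s + 2 := by
          rw [Finset.card_insert_of_notMem haJ, hJfull]
        calc s + 2 = (insert a J).card := h1.symm
          _ ≤ (Mset G side b (key G w)).card := Finset.card_le_card hsub
      omega
  have hsubB : (Exc G side s a).filter (fun b => ¬ G.Adj a b) ⊆
      J.biUnion (fun j => nbr G j \ nbr G a) := by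
    intro b hb
    obtain ⟨j, hj, hmem⟩ := hcover b hb
    exact Finset.mem_biUnion.mpr ⟨j, hj, hmem⟩
  calc ((Exc G side s a).filter fun b => ¬ G.Adj a b).card
      ≤ (J.biUnion (fun j => nbr G j \ nbr G a)).card := Finset.card_le_card hsubB
    _ ≤ ∑ j ∈ J, (nbr G j \ nbr G a).card := Finset.card_biUnion_le
    _ ≤ J.card * s := by
        have hb : ∀ j ∈ J, (nbr G j \ nbr G a).card ≤ s := by
          intro j hj
          have hjL := hJsub hj
          have hjside := ((memL j).mp hjL).1
          have hjkey := ((memL j).mp hjL).2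
          have hja : j ≠ a := fun he => by rw [he] at hjkey; omega
          have hdeg : deg G j ≤ deg G a := deg_le_of_key_le hjkey.le
          exact degNested G side hcol hfree hja (hjside.trans ha.symm) hdeg
        have := Finset.sum_le_card_nsmul J _ s hb
        simpa [smul_eq_mul] using this
    _ ≤ (s+1) * s := Nat.mul_le_mul_right s (by rw [hJcard]; exact min_le_left _ _)
    _ = t * (t-1) := by
        have h1 : s + 1 = t := by omega
        rw [← h1]
        congr 1

open Classical in
lemma E1_bound (ht : 2 ≤ t)
    (hcol : ∀ u v : Fin n, G.Adj u v → side u ≠ side v)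
    (hfree : ¬ ∃ f : F1tp t t ↪g G, side (f (Sum.inl 0)) = side (f (Sum.inl 1)))
    (a : Fin n) (ha : side a = false) :
    ((Exc G side (t-1) a).filter fun b => G.Adj a b).card ≤ (t-1) * t := by
  classical
  set s := t - 1 with hs
  set K := key G a with hK
  set E1 := (Exc G side s a).filter (fun b => G.Adj a b) with hE1
  have memE1 : ∀ b, b ∈ E1 → side b = true ∧ G.Adj a b ∧ ¬ theta G side s b ≤ K := by
    intro b hb
    rw [hE1, Finset.mem_filter, mem_Exc] at hb
    obtain ⟨⟨hbtrue, hbiff⟩, hadj⟩ := hb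
    refine ⟨hbtrue, hadj, fun hth => hbiff (iff_of_true hadj hth)⟩
  rcases E1.eq_empty_or_nonempty with he | hne
  · rw [he]; simp
  obtain ⟨bm, hbm, hbmax⟩ := Finset.exists_max_image E1 (deg G) hne
  set q := (Mset G side bm K).card with hq
  have hqbig : s + 1 ≤ q := by
    by_contra hqs
    push_neg at hqs
    have : a ∈ Wset G side s bm :=
      mem_Wset.mpr ⟨ha, (memE1 bm hbm).2.1, by rw [← hK]; omega⟩
    exact (memE1 bm hbm).2.2 (theta_le this)
  have hlow : ∀ b ∈ E1, q - s ≤ ((Mset G side b K) ∩ (Mset G side bm K)).card := by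
    intro b hb
    rcases eq_or_ne b bm with rfl | hbne
    · rw [Finset.inter_self]; omega
    · have hsdiff : Mset G side bm K \ Mset G side b K ⊆ nbr G b \ nbr G bm := by
        intro x hx
        rw [Finset.mem_sdiff, mem_Mset, mem_Mset] at hx
        obtain ⟨⟨hxside, hxkey, hxnadj⟩, hxout⟩ := hx
        have hxadj : G.Adj x b := by
          by_contra hxadj
          exact hxout ⟨hxside, hxkey, hxadj⟩
        exact Finset.mem_sdiff.mpr ⟨mem_nbr.mpr hxadj.symm,
          fun h => hxnadj (mem_nbr.mp h).symm⟩
      have hbside : side b = true := (memE1 b hb).1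
      have hbmside : side bm = true := (memE1 bm hbm).1
      have hdegb : deg G b ≤ deg G bm := hbmax b hb
      have hcs : (nbr G b \ nbr G bm).card ≤ s :=
        degNested G side hcol hfree hbne (hbside.trans hbmside.symm) hdegb
      have hcs2 : (Mset G side bm K \ Mset G side b K).card ≤ s :=
        le_trans (Finset.card_le_card hsdiff) hcs
      have hsplit : (Mset G side bm K ∩ Mset G side b K).card
          + (Mset G side bm K \ Mset G side b K).card = q :=
        Finset.card_inter_add_card_sdiff _ _
      have : (Mset G side bm K ∩ Mset G side b K).card
          = (Mset G side b K ∩ Mset G side bm K).card := by rw [Finset.inter_comm]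
      omega
  have hbudget : ∀ x ∈ Mset G side bm K,
      (E1.filter (fun b => x ∈ Mset G side b K)).card ≤ s := by
    intro x hx
    rw [mem_Mset] at hx
    obtain ⟨hxside, hxkey, hxnadj⟩ := hx
    have hxa : a ≠ x := fun he => hxnadj (he ▸ (memE1 bm hbm).2.1)
    have hsub : E1.filter (fun b => x ∈ Mset G side b K) ⊆ nbr G a \ nbr G x := by
      intro b hb
      rw [Finset.mem_filter] at hb
      obtain ⟨hbE, hbM⟩ := hb
      rw [mem_Mset] at hbM
      exact Finset.mem_sdiff.mpr ⟨mem_nbr.mpr (memE1 b hbE).2.1,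
        fun h => hbM.2.2 (mem_nbr.mp h)⟩
    have hdeg : deg G a ≤ deg G x := deg_le_of_key_le hxkey
    have hcs : (nbr G a \ nbr G x).card ≤ s :=
      degNested G side hcol hfree hxa (ha.trans hxside.symm) hdeg
    exact le_trans (Finset.card_le_card hsub) hcs
  have hswap : ∑ b ∈ E1, ((Mset G side b K) ∩ (Mset G side bm K)).card
      = ∑ x ∈ Mset G side bm K, (E1.filter (fun b => x ∈ Mset G side b K)).card := by
    have h1 : ∀ b, (Mset G side b K) ∩ (Mset G side bm K)
        = (Mset G side bm K).filter (fun x => x ∈ Mset G side b K) := by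
      intro b
      rw [Finset.filter_mem_eq_inter, Finset.inter_comm]
    simp only [h1, Finset.card_filter]
    exact Finset.sum_comm
  have hmain : E1.card * (q - s) ≤ q * s := by
    calc E1.card * (q - s)
        ≤ ∑ b ∈ E1, ((Mset G side b K) ∩ (Mset G side bm K)).card := by
          have := Finset.card_nsmul_le_sum E1 _ (q - s) hlow
          simpa [smul_eq_mul] using this
      _ = ∑ x ∈ Mset G side bm K, (E1.filter (fun b => x ∈ Mset G side b K)).card := hswap
      _ ≤ q * s := by
          have := Finset.sum_le_card_nsmul (Mset G side bm K) _ s hbudget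
          simpa [smul_eq_mul, hq] using this
  have hfinal : E1.card ≤ s * (s + 1) := by
    have h2 : q ≤ (s+1) * (q - s) := by
      have h3 : s + (q - s) = q := by omega
      nlinarith [h3]
    have hqs : q * s ≤ (s * (s+1)) * (q - s) := by
      calc q * s = s * q := by ring
        _ ≤ s * ((s+1) * (q - s)) := Nat.mul_le_mul_left s h2
        _ = (s * (s+1)) * (q - s) := by ring
    have := le_trans hmain hqs
    exact Nat.le_of_mul_le_mul_right this (by omega)
  calc E1.card ≤ s * (s + 1) := hfinal
    _ = (t-1) * t := by
        rw [hs]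
        congr 1
        omega

open Classical in
lemma Exc_card (ht : 2 ≤ t)
    (hcol : ∀ u v : Fin n, G.Adj u v → side u ≠ side v)
    (hfree : ¬ ∃ f : F1tp t t ↪g G, side (f (Sum.inl 0)) = side (f (Sum.inl 1)))
    (a : Fin n) (ha : side a = false) :
    (Exc G side (t-1) a).card ≤ 2 * (t-1) * t := by
  classical
  have hsplit := Finset.card_filter_add_card_filter_not
    (s := Exc G side (t-1) a) (p := fun b => G.Adj a b)
  have h1 := E1_bound ht hcol hfree a ha
  have h2 := E2_bound ht hcol hfree a ha
  have h3 : 2 * (t-1) * t = (t-1) * t + t * (t-1) := by ring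
  omega

end Bounds

end Stmt6

open Stmt6

/-- For `t ≥ 2`, the class of bipartite graphs admitting a bipartition with no unbalanced
induced copy of `2K_{1,t}` (both star centers in the same part) admits an implicit
representation. -/
theorem statement6 (t : ℕ) (ht : 2 ≤ t) :
    AdmitsImplicit (fun n G =>
      ∃ side : Fin n → Bool, (∀ u v : Fin n, G.Adj u v → side u ≠ side v) ∧
        ¬ ∃ f : F1tp t t ↪g G, side (f (Sum.inl 0)) = side (f (Sum.inl 1))) := by
  classical
  refine ⟨4 * 2 ^ (2*(t-1)*t + 3),
    (fun x y =>
      ((decL (2*(t-1)*t + 3) x).getD 0 2 = 0 ∧ (decL (2*(t-1)*t + 3) y).getD 0 2 = 1 ∧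
        Xor' ((decL (2*(t-1)*t + 3) y).getD 2 0 ≤ (decL (2*(t-1)*t + 3) x).getD 2 0)
             ((decL (2*(t-1)*t + 3) y).getD 1 0 ∈ (decL (2*(t-1)*t + 3) x).drop 3))
      ∨ ((decL (2*(t-1)*t + 3) x).getD 0 2 = 1 ∧ (decL (2*(t-1)*t + 3) y).getD 0 2 = 0 ∧
        Xor' ((decL (2*(t-1)*t + 3) x).getD 2 0 ≤ (decL (2*(t-1)*t + 3) y).getD 2 0)
             ((decL (2*(t-1)*t + 3) x).getD 1 0 ∈ (decL (2*(t-1)*t + 3) y).drop 3))), ?_⟩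
  intro n hn G hG
  obtain ⟨side, hcol, hfree⟩ := hG
  set s := t - 1 with hs
  set g := 2*(t-1)*t with hg
  set excL : Fin n → List ℕ := fun a =>
    ((Exc G side s a).toList.map Fin.val) ++ List.replicate (g - (Exc G side s a).card) n
    with hexcL
  set lab : Fin n → List ℕ := fun v =>
    if side v = false then 0 :: v.val :: key G v :: excL v
    else 1 :: v.val :: theta G side s v :: List.replicate g n
    with hlab
  have hExcCard : ∀ a : Fin n, side a = false → (Exc G side s a).card ≤ g := by
    intro a ha
    rw [hg]
    exact Exc_card ht hcol hfree a ha
  have hlenExc : ∀ a : Fin n, side a = false → (excL a).length = g := by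
    intro a ha
    simp only [hexcL]
    simp only [List.length_append, List.length_map, Finset.length_toList, List.length_replicate]
    have := hExcCard a ha
    omega
  have hlen : ∀ v : Fin n, (lab v).length = g + 3 := by
    intro v
    simp only [hlab]
    split_ifs with hv
    · simp only [List.length_cons, hlenExc v hv] <;> omega
    · simp only [List.length_cons, List.length_replicate] <;> omega
  have hbound : ∀ v : Fin n, ∀ x ∈ lab v, x ≤ n*n + n := by
    intro v x hx
    have hvn := v.isLt
    simp only [hlab] at hx
    have hnn : n ≤ n * n + n := by omega
    split_ifs at hx with hv
    · simp only [List.mem_cons] at hx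
      rcases hx with rfl | rfl | rfl | hx
      · omega
      · omega
      · exact (key_lt G v).le
      · simp only [hexcL, List.mem_append] at hx
        rcases hx with hx | hx
        · obtain ⟨w, _, rfl⟩ := List.mem_map.mp hx
          have := w.isLt
          omega
        · have := List.eq_of_mem_replicate hx
          omega
    · simp only [List.mem_cons] at hx
      rcases hx with rfl | rfl | rfl | hx
      · omega
      · omega
      · exact theta_le_top G side s v
      · have := List.eq_of_mem_replicate hx
        omega
  have hlt : ∀ v : Fin n, enc (lab v) < n ^ (4 * 2 ^ (g + 3)) := by
    intro v
    have h1 : enc (lab v) < (n*n + n + 1) ^ (2 ^ (lab v).length) :=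
      enc_lt (lab v) (n*n+n) (hbound v)
    rw [hlen v] at h1
    have hA2 : 2 * n ≤ n * n := Nat.mul_le_mul_right n hn
    have hA4 : 2 ≤ n * n := by omega
    have hAA : 2 * (n * n) ≤ (n * n) * (n * n) := Nat.mul_le_mul_right (n*n) hA4
    have h4 : n*n + n + 1 ≤ n ^ 4 := by
      have : n ^ 4 = (n*n) * (n*n) := by ring
      omega
    have h2 : (n*n + n + 1) ^ (2 ^ (g+3)) ≤ (n ^ 4) ^ (2 ^ (g+3)) :=
      Nat.pow_le_pow_left h4 _
    have h3 : (n ^ 4) ^ (2 ^ (g+3)) = n ^ (4 * 2 ^ (g+3)) := by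
      rw [← pow_mul]
    omega
  refine ⟨fun v => ⟨enc (lab v), hlt v⟩, ?_, ?_⟩
  · intro u v huv
    have henc : enc (lab u) = enc (lab v) := congrArg Fin.val huv
    have hdecu : decL (g + 3) (enc (lab u)) = lab u := by
      have := decL_enc (lab u); rwa [hlen u] at this
    have hdecv : decL (g + 3) (enc (lab v)) = lab v := by
      have := decL_enc (lab v); rwa [hlen v] at this
    have hl : lab u = lab v := by rw [← hdecu, ← hdecv, henc]
    have hval : (lab u).getD 1 0 = u.val := by
      simp only [hlab]; split_ifs <;> rfl
    have hval' : (lab v).getD 1 0 = v.val := by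
      simp only [hlab]; split_ifs <;> rfl
    apply Fin.val_injective
    rw [← hval, ← hval', hl]
  · intro u v huv
    have hdec : ∀ w : Fin n, decL (g + 3) (enc (lab w)) = lab w := by
      intro w
      have := decL_enc (lab w); rwa [hlen w] at this
    have hfield0f : ∀ w : Fin n, side w = false → (lab w).getD 0 2 = 0 := by
      intro w hw; simp only [hlab]; rw [if_pos hw]
      rfl
    have hfield0t : ∀ w : Fin n, side w = true → (lab w).getD 0 2 = 1 := by
      intro w hw; simp only [hlab]; rw [if_neg (by rw [hw]; simp)]
      rfl
    have hfield2f : ∀ w : Fin n, side w = false → (lab w).getD 2 0 = key G w := by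
      intro w hw; simp only [hlab]; rw [if_pos hw]
      rfl
    have hfield2t : ∀ w : Fin n, side w = true → (lab w).getD 2 0 = theta G side s w := by
      intro w hw; simp only [hlab]; rw [if_neg (by rw [hw]; simp)]
      rfl
    have hfield1 : ∀ w : Fin n, (lab w).getD 1 0 = w.val := by
      intro w; simp only [hlab]; split_ifs <;> rfl
    have hdropf : ∀ w : Fin n, side w = false → (lab w).drop 3 = excL w := by
      intro w hw; simp only [hlab]; rw [if_pos hw]
      rfl
    have hmemExc : ∀ a b : Fin n, (b.val ∈ excL a ↔ b ∈ Exc G side s a) := by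
      intro a b
      simp only [hexcL]
      constructor
      · intro h
        rcases List.mem_append.mp h with h | h
        · obtain ⟨w, hw, hwv⟩ := List.mem_map.mp h
          have : w = b := Fin.val_injective hwv
          exact this ▸ Finset.mem_toList.mp hw
        · have := List.eq_of_mem_replicate h
          have := b.isLt
          omega
      · intro h
        exact List.mem_append.mpr (Or.inl (List.mem_map.mpr ⟨b, Finset.mem_toList.mpr h, rfl⟩))
    have hcore : ∀ a b : Fin n, side a = false → side b = true →
        (G.Adj a b ↔ Xor' (theta G side s b ≤ key G a) (b.val ∈ excL a)) := by
      intro a b hsa hsb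
      rw [hmemExc a b]
      have hEx : b ∈ Exc G side s a ↔ ¬ (G.Adj a b ↔ theta G side s b ≤ key G a) := by
        rw [mem_Exc]; simp [hsb]
      rw [hEx]
      by_cases hA : G.Adj a b <;> by_cases hT : theta G side s b ≤ key G a <;>
        simp [Xor', hA, hT]
    show G.Adj u v ↔ _
    simp only [hdec]
    cases hsu : side u <;> cases hsv : side v
    · rw [hfield0f u hsu, hfield0f v hsv]
      constructor
      · intro h
        exact absurd (by rw [hsu, hsv] : side u = side v) (hcol u v h)
      · rintro (⟨-, h, -⟩ | ⟨h, -⟩) <;> omega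
    · rw [hfield0f u hsu, hfield0t v hsv, hfield2f u hsu, hfield2t v hsv,
        hfield1 v, hdropf u hsu]
      rw [hcore u v hsu hsv]
      constructor
      · intro h
        exact Or.inl ⟨rfl, rfl, h⟩
      · rintro (⟨-, -, h⟩ | ⟨h, -⟩)
        · exact h
        · omega
    · rw [hfield0t u hsu, hfield0f v hsv, hfield2t u hsu, hfield2f v hsv,
        hfield1 u, hdropf v hsv]
      rw [G.adj_comm, hcore v u hsv hsu]
      constructor
      · intro h
        exact Or.inr ⟨rfl, rfl, h⟩
      · rintro (⟨h, -⟩ | ⟨-, -, h⟩)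
        · omega
        · exact h
    · rw [hfield0t u hsu, hfield0t v hsv]
      constructor
      · intro h
        exact absurd (by rw [hsu, hsv] : side u = side v) (hcol u v h)
      · rintro (⟨h, -⟩ | ⟨-, h, -⟩) <;> omega
end

section
/- For every integer t ≥ 2, the class of F¹_{t,t}-free finite bipartite graphs admits an implicit representation. -/
open SimpleGraph

/-!
Let `G` be bipartite and `F¹_{t,t}`-free, and `k = t - 1`. Two vertices `u, v` on the same side
cannot both have `t` private neighbours (with the centres `u, v` these would induce `F¹_{t,t}`),
so their neighbourhoods are nested up to `k` vertices. A double counting argument turns this into: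
every nonempty vertex set `s` contains a vertex with at most `2k` neighbours in `s`, or at most
`2k` non-neighbours on the other side in `s`. Deleting such vertices one by one gives an order in
which each vertex sees only `2k` exceptional later vertices, and a label consisting of a vertex's
position, its colour, the case it is in and its `2k` exceptions determines all adjacencies. These
are `2k + 3` numbers below `n`, which fit below `n ^ 2 ^ (2k + 3)` through iterated `Nat.pair`.
-/

open Finset Function

section Embedding

variable {V : Type*} {G : SimpleGraph V}

lemma F1tp_adj_inl_inr {t p : ℕ} (a : Fin 2) (j : Fin (t + p)) :
    (F1tp t p).Adj (.inl a) (.inr j) ↔ (a = 0 ↔ (j : ℕ) < t) := by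
  fin_cases a <;> simp [F1tp]

theorem nonempty_F1tp_embedding {t p : ℕ} (C : G.Coloring (Fin 2)) {u v : V} (huv : u ≠ v)
    (hC : C u = C v) {a : Fin t → V} {b : Fin p → V} (ha : Injective a) (hb : Injective b)
    (hua : ∀ i, G.Adj u (a i)) (hva : ∀ i, ¬ G.Adj v (a i))
    (hvb : ∀ j, G.Adj v (b j)) (hub : ∀ j, ¬ G.Adj u (b j)) :
    Nonempty (F1tp t p ↪g G) := by
  have hleaf : ∀ j, C (Fin.append a b j) ≠ C u := by
    refine Fin.addCases (fun i => ?_) (fun j => ?_)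
    · simpa using (C.valid (hua i)).symm
    · simpa [hC] using (C.valid (hvb j)).symm
  have huv' : ¬ G.Adj u v := fun h => C.valid h hC
  have hcentre_leaf : ∀ c j,
      G.Adj (![u, v] c) (Fin.append a b j) ↔ (F1tp t p).Adj (.inl c) (.inr j) := by
    intro c j
    rw [F1tp_adj_inl_inr]
    fin_cases c <;> induction j using Fin.addCases <;> simp [*]
  let f : Fin 2 ⊕ Fin (t + p) → V := Sum.elim ![u, v] (Fin.append a b)
  have hf : Injective f := by
    refine Injective.sumElim ?_ ?_ ?_
    · intro c d; fin_cases c <;> fin_cases d <;> simp [huv, huv.symm]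
    · exact Fin.append_injective_iff.2 ⟨ha, hb, fun i j h => hub j (h ▸ hua i)⟩
    · intro c j h
      exact hleaf j (by fin_cases c <;> simp_all)
  have hadj : ∀ x y, G.Adj (f x) (f y) ↔ (F1tp t p).Adj x y := by
    rintro (c | i) (d | j)
    · have hnot : ¬ G.Adj (![u, v] c) (![u, v] d) := by
        fin_cases c <;> fin_cases d <;> simp [huv', G.adj_comm v u]
      simp [f, hnot, F1tp]
    · exact hcentre_leaf c j
    · rw [G.adj_comm, (F1tp t p).adj_comm]; exact hcentre_leaf d i
    · have hnot : ¬ G.Adj (Fin.append a b i) (Fin.append a b j) := fun h =>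
        C.valid h (by have := hleaf i; have := hleaf j; omega)
      simp [f, hnot, F1tp]
  exact ⟨⟨⟨f, hf⟩, hadj _ _⟩⟩

end Embedding

def tupleCode : List ℕ → ℕ := List.foldr Nat.pair 0

def tupleDecode : ℕ → ℕ → List ℕ
  | 0, _ => []
  | m + 1, a => a.unpair.1 :: tupleDecode m a.unpair.2

theorem tupleDecode_tupleCode : ∀ l : List ℕ, tupleDecode l.length (tupleCode l) = l
  | [] => rfl
  | x :: l => by
    change tupleDecode (l.length + 1) (Nat.pair x (tupleCode l)) = x :: l
    simp [tupleDecode, tupleDecode_tupleCode l]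

theorem tupleCode_lt {M : ℕ} (hM : 0 < M) :
    ∀ l : List ℕ, (∀ x ∈ l, x < M) → tupleCode l < M ^ 2 ^ l.length
  | [], _ => by simpa [tupleCode] using hM
  | x :: l, h => by
    have hx : x < M := h x (by simp)
    have ih := tupleCode_lt hM l fun y hy => h y (by simp [hy])
    have hM' : M ≤ M ^ 2 ^ l.length := Nat.le_self_pow (by positivity) M
    calc tupleCode (x :: l) < (max x (tupleCode l) + 1) ^ 2 := Nat.pair_lt_max_add_one_sq _ _
      _ ≤ (M ^ 2 ^ l.length) ^ 2 := by gcongr; omega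
      _ = M ^ 2 ^ (x :: l).length := by rw [← pow_mul, List.length_cons, pow_succ]

section EliminationOrder

variable {V : Type*} [DecidableEq V]

theorem exists_elimination_order_on (P : Finset V → V → Prop)
    (hP : ∀ s : Finset V, s.Nonempty → ∃ w ∈ s, P s w) (s : Finset V) :
    ∃ e : V → ℕ, Set.InjOn e s ∧ (∀ v ∈ s, e v < #s) ∧ ∀ v ∈ s, P {u ∈ s | e v ≤ e u} v := by
  induction s using Finset.strongInduction with
  | H s ih =>
  obtain rfl | hs := s.eq_empty_or_nonempty
  · simp
  obtain ⟨w, hws, hw⟩ := hP s hs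
  obtain ⟨e, he, hlt, heP⟩ := ih (s.erase w) (erase_ssubset hws)
  refine ⟨fun u => if u = w then 0 else e u + 1, ?_, ?_, ?_⟩
  · intro a ha b hb hab
    by_cases haw : a = w <;> by_cases hbw : b = w <;> simp only [haw, hbw, if_true, if_false] at hab
    · exact haw.trans hbw.symm
    · omega
    · omega
    · exact he (mem_erase.2 ⟨haw, ha⟩) (mem_erase.2 ⟨hbw, hb⟩) (by omega)
  · intro v hv
    have := card_erase_add_one hws
    dsimp only
    split_ifs with hvw
    · omega
    · have := hlt v (mem_erase.2 ⟨hvw, hv⟩); omega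
  · intro v hv
    dsimp only
    split_ifs with hvw
    · subst hvw; simpa using hw
    · have hlater : {u ∈ s | e v + 1 ≤ if u = w then 0 else e u + 1} =
          {u ∈ s.erase w | e v ≤ e u} := by
        ext u
        by_cases huw : u = w <;> simp [huw]
      rw [hlater]
      exact heP v (mem_erase.2 ⟨hvw, hv⟩)

theorem exists_elimination_order [Fintype V] (P : Finset V → V → Prop)
    (hP : ∀ s : Finset V, s.Nonempty → ∃ w ∈ s, P s w) :
    ∃ e : V → ℕ, Injective e ∧ (∀ v, e v < Fintype.card V) ∧ ∀ v, P {u | e v ≤ e u} v := by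
  obtain ⟨e, he, hlt, heP⟩ := exists_elimination_order_on P hP univ
  exact ⟨e, Set.injOn_univ.1 (by simpa using he), fun v => hlt v (mem_univ v),
    fun v => heP v (mem_univ v)⟩

end EliminationOrder

namespace SimpleGraph.Coloring

variable {V : Type*} [Fintype V] [DecidableEq V] {G : SimpleGraph V} [DecidableRel G.Adj]
  (C : G.Coloring (Fin 2))

def AlmostNested (k : ℕ) : Prop :=
  ∀ u v, C u = C v →
    #(G.neighborFinset u \ G.neighborFinset v) ≤ k ∨ #(G.neighborFinset v \ G.neighborFinset u) ≤ k

theorem almostNested_of_F1tp_free {t : ℕ} (hfree : ¬ Nonempty (F1tp t t ↪g G)) :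
    AlmostNested C (t - 1) := by
  intro u v huv
  by_contra! h
  obtain ⟨hA, hB⟩ := h
  have hne : u ≠ v := by rintro rfl; simp at hA
  obtain ⟨a, ha⟩ := Embedding.exists_of_card_le_finset (α := Fin t)
    (s := G.neighborFinset u \ G.neighborFinset v) (by rw [Fintype.card_fin]; omega)
  obtain ⟨b, hb⟩ := Embedding.exists_of_card_le_finset (α := Fin t)
    (s := G.neighborFinset v \ G.neighborFinset u) (by rw [Fintype.card_fin]; omega)
  have ha' : ∀ i, G.Adj u (a i) ∧ ¬ G.Adj v (a i) := fun i => by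
    simpa using ha (Set.mem_range_self i)
  have hb' : ∀ j, G.Adj v (b j) ∧ ¬ G.Adj u (b j) := fun j => by
    simpa using hb (Set.mem_range_self j)
  exact hfree <| nonempty_F1tp_embedding C hne huv a.injective b.injective
    (fun i => (ha' i).1) (fun i => (ha' i).2) (fun j => (hb' j).1) (fun j => (hb' j).2)

def FewNbrsOrCrossNonNbrs (k : ℕ) (s : Finset V) (v : V) : Prop :=
  #{u ∈ s | G.Adj v u} ≤ k ∨ #{u ∈ s | C u ≠ C v ∧ ¬ G.Adj v u} ≤ k

variable {C} {k : ℕ}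

theorem AlmostNested.card_filter_adj_sdiff_le (hC : AlmostNested C k) {x x' : V}
    (hx : C x = C x') {s : Finset V} (hdeg : #{y ∈ s | G.Adj x y} ≤ #{y ∈ s | G.Adj x' y}) :
    #({y ∈ s | G.Adj x y} \ {y ∈ s | G.Adj x' y}) ≤ k := by
  have hsub : ∀ a b, {y ∈ s | G.Adj a y} \ {y ∈ s | G.Adj b y} ⊆
      G.neighborFinset a \ G.neighborFinset b := by
    intro a b y
    simp only [mem_sdiff, mem_filter, mem_neighborFinset]
    tauto
  rcases hC x x' hx with h | h
  · exact (card_le_card (hsub x x')).trans h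
  · exact (card_sdiff_le_card_sdiff_iff.2 hdeg).trans ((card_le_card (hsub x' x)).trans h)

/- Take `x₁` of maximum degree on one side and `R` its non-neighbours across: vertices on the side
of `x₁` have at most `k` neighbours in `R`. Take `y₁ ∈ R` of minimum degree `d`: each `y ∈ R` misses
at most `k` neighbours of `y₁`. Counting edges between `R` and `N(y₁)` gives `|R| (d - k) ≤ d k`,
impossible when `|R|, d > 2k`. -/
theorem AlmostNested.exists_fewNbrsOrCrossNonNbrs (hC : AlmostNested C k) {s : Finset V}
    (hs : s.Nonempty) : ∃ w ∈ s, FewNbrsOrCrossNonNbrs C (2 * k) s w := by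
  by_contra! hmany
  simp only [FewNbrsOrCrossNonNbrs, not_or, not_le] at hmany
  obtain ⟨v₀, hv₀⟩ := hs
  obtain ⟨x₁, hx₁, hx₁max⟩ := exists_max_image {x ∈ s | C x = C v₀}
    (fun x => #{y ∈ s | G.Adj x y}) ⟨v₀, by simp [hv₀]⟩
  rw [mem_filter] at hx₁
  set R := {y ∈ s | C y ≠ C x₁ ∧ ¬ G.Adj x₁ y}
  have hR : 2 * k < #R := (hmany x₁ hx₁.1).2
  obtain ⟨y₁, hy₁, hy₁min⟩ := exists_min_image R (fun y => #{x ∈ s | G.Adj y x})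
    (card_pos.1 (by omega))
  set N := {x ∈ s | G.Adj y₁ x}
  have hN : 2 * k < #N := (hmany y₁ (mem_filter.1 hy₁).1).1
  have hedges : #R * (#N - k) ≤ #N * k := by
    refine card_mul_le_card_mul G.Adj (fun y hy => ?_) (fun x hx => ?_)
    · obtain ⟨hys, hyx₁, -⟩ := mem_filter.1 hy
      have hy₁x₁ := (mem_filter.1 hy₁).2.1
      have hlost : #(N \ {x ∈ s | G.Adj y x}) ≤ k :=
        hC.card_filter_adj_sdiff_le (show C y₁ = C y by omega) (hy₁min y hy)
      have hinter : N.bipartiteAbove G.Adj y = N ∩ {x ∈ s | G.Adj y x} := by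
        ext x; simp only [N, bipartiteAbove, mem_filter, mem_inter]; tauto
      have := card_sdiff_add_card_inter N {x ∈ s | G.Adj y x}
      rw [hinter]
      omega
    · obtain ⟨hxs, hy₁x⟩ := mem_filter.1 hx
      have hxx₁ : C x = C x₁ := by
        have := C.valid hy₁x; have := (mem_filter.1 hy₁).2.1; omega
      refine (card_le_card fun y hy => ?_).trans
        (hC.card_filter_adj_sdiff_le hxx₁ (hx₁max x (by simp [hxs, hxx₁, hx₁.2])))
      simp only [bipartiteBelow, R, mem_filter] at hy
      simp only [mem_sdiff, mem_filter]
      exact ⟨⟨hy.1.1, hy.2.symm⟩, fun h => hy.1.2.2 h.2⟩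
  have : (2 * k + 1) * (#N - k) ≤ #N * k := (Nat.mul_le_mul_right _ hR).trans hedges
  obtain ⟨m, hm⟩ : ∃ m, #N = k + m := ⟨#N - k, by omega⟩
  rw [hm, Nat.add_sub_cancel_left] at this
  nlinarith

end SimpleGraph.Coloring

namespace OrderLabeling

def rowAdj : List ℕ → List ℕ → Prop
  | _ :: c :: f :: l, j :: c' :: _ => if f = 1 then j ∈ l else c ≠ c' ∧ j ∉ l
  | _, _ => False

def labelDecoder (m a b : ℕ) : Prop :=
  let x := tupleDecode m a
  let y := tupleDecode m b
  if x.headD 0 < y.headD 0 then rowAdj x y else rowAdj y x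

variable {V : Type*} [Fintype V] {G : SimpleGraph V} [DecidableRel G.Adj]
  (C : G.Coloring (Fin 2)) (k : ℕ) (e : V → ℕ)

def later (v : V) : Finset V := {u | e v ≤ e u}

def rowSet (v : V) : Finset V :=
  if #{u ∈ later e v | G.Adj v u} ≤ k then {u ∈ later e v | G.Adj v u}
  else {u ∈ later e v | C u ≠ C v ∧ ¬ G.Adj v u}

/- The row of `v`: its position, its colour, a flag telling whether `rowSet` lists the later
neighbours (`1`) or the later non-neighbours across (`0`), and then the positions of `rowSet`,
padded to length `k` with `e v`. The padding is harmless: the row of `v` is only consulted for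
vertices strictly later than `v`. -/
noncomputable def row (v : V) : List ℕ :=
  e v :: C v :: (if #{u ∈ later e v | G.Adj v u} ≤ k then 1 else 0) ::
    ((rowSet C k e v).toList.map e ++ List.replicate (k - #(rowSet C k e v)) (e v))

noncomputable def label (v : V) : ℕ := tupleCode (row C k e v)

variable {C k e}

theorem headD_row (v : V) : (row C k e v).headD 0 = e v := rfl

theorem rowAdj_row {u v : V} (he : Injective e) (huv : e u < e v) :
    rowAdj (row C k e u) (row C k e v) ↔ G.Adj u v := by
  have hvu : v ≠ u := fun h => huv.ne' (congrArg e h)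
  have hmem : e v ∈ (rowSet C k e u).toList.map e ++
      List.replicate (k - #(rowSet C k e u)) (e u) ↔ v ∈ rowSet C k e u := by
    simp [he.eq_iff, hvu]
  have hlater : v ∈ later e u := by simp [later, huv.le]
  simp only [row, rowAdj, hmem]
  unfold rowSet
  by_cases hfew : #{w ∈ later e u | G.Adj u w} ≤ k
  · simp [hfew, hlater]
  · simp only [hfew, if_false, zero_ne_one, mem_filter, hlater, true_and, not_and, not_not,
      Fin.val_injective.ne_iff]
    exact ⟨fun h => h.2 (Ne.symm h.1), fun h => ⟨C.valid h, fun _ => h⟩⟩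

theorem length_row (hP : ∀ v, C.FewNbrsOrCrossNonNbrs k (later e v) v) (v : V) :
    (row C k e v).length = k + 3 := by
  have : #(rowSet C k e v) ≤ k := by
    unfold rowSet
    split_ifs with h
    · exact h
    · exact (hP v).resolve_left h
  simp only [row, List.length_cons, List.length_append, List.length_map, length_toList,
    List.length_replicate]
  omega

theorem label_lt {n : ℕ} (hn : 2 ≤ n) (hlt : ∀ v, e v < n)
    (hP : ∀ v, C.FewNbrsOrCrossNonNbrs k (later e v) v) (v : V) :
    label C k e v < n ^ 2 ^ (k + 3) := by
  rw [← length_row hP v]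
  refine tupleCode_lt (by omega) _ fun x hx => ?_
  simp only [row, List.mem_cons, List.mem_append, List.mem_map, List.mem_replicate] at hx
  rcases hx with rfl | rfl | rfl | ⟨w, -, rfl⟩ | ⟨-, rfl⟩
  · exact hlt v
  · omega
  · split_ifs <;> omega
  · exact hlt w
  · exact hlt v

theorem tupleDecode_label (hP : ∀ v, C.FewNbrsOrCrossNonNbrs k (later e v) v) (v : V) :
    tupleDecode (k + 3) (label C k e v) = row C k e v := by
  rw [label, ← length_row hP v, tupleDecode_tupleCode]

theorem label_injective (he : Injective e) (hP : ∀ v, C.FewNbrsOrCrossNonNbrs k (later e v) v) :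
    Injective (label C k e) := by
  intro u v h
  have := congrArg (fun a => (tupleDecode (k + 3) a).headD 0) h
  simp only [tupleDecode_label hP, headD_row] at this
  exact he this

theorem labelDecoder_label (he : Injective e) (hP : ∀ v, C.FewNbrsOrCrossNonNbrs k (later e v) v)
    {u v : V} (huv : u ≠ v) :
    labelDecoder (k + 3) (label C k e u) (label C k e v) ↔ G.Adj u v := by
  simp only [labelDecoder, tupleDecode_label hP, headD_row]
  rcases lt_or_gt_of_ne (he.ne huv) with h | h
  · rw [if_pos h, rowAdj_row he h]
  · rw [if_neg h.asymm, rowAdj_row he h, G.adj_comm]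

end OrderLabeling

theorem statement7_general (t : ℕ) :
    AdmitsImplicit (fun n G => G.Colorable 2 ∧ ¬ Nonempty (F1tp t t ↪g G)) := by
  classical
  refine ⟨2 ^ (2 * (t - 1) + 3), OrderLabeling.labelDecoder (2 * (t - 1) + 3), ?_⟩
  rintro _ hn G ⟨⟨C⟩, hfree⟩
  obtain ⟨e, he, hlt, hP⟩ := exists_elimination_order (C.FewNbrsOrCrossNonNbrs (2 * (t - 1)))
    fun _ => (C.almostNested_of_F1tp_free hfree).exists_fewNbrsOrCrossNonNbrs
  rw [Fintype.card_fin] at hlt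
  exact ⟨fun v => ⟨OrderLabeling.label C _ e v, OrderLabeling.label_lt hn hlt hP v⟩,
    fun u v h => OrderLabeling.label_injective he hP (congrArg Fin.val h),
    fun u v huv => (OrderLabeling.labelDecoder_label he hP huv).symm⟩

/-- For `t ≥ 2`, the class of `F¹_{t,t}`-free bipartite graphs admits an implicit
representation. -/
theorem statement7 (t : ℕ) (ht : 2 ≤ t) :
    AdmitsImplicit (fun n G => G.Colorable 2 ∧ ¬ Nonempty (F1tp t t ↪g G)) :=
  statement7_general t
end

section
/- Fix an integer t ≥ 1. There exist a constant c ∈ ℕ and a decoder relation D : ℕ → ℕ → Prop such that for every n ≥ 2 and every n-vertex finite bipartite graph G with a given bipartition (U, W) containing no one-sided induced copy of F¹_{t,1} with its star centers in U (i.e., no induced subgraph isomorphic to the disjoint union of a star K_{1,t} and a single edge K₂ in which the vertex of degree t lies in U), there is an injective labeling ℓ : V(G) → Fin (n ^ c) such that for all distinct vertices u, v of G, u and v are adjacent in G if and only if D (ℓ u) (ℓ v) holds. -/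
open SimpleGraph

/-!
Let `U` be the vertices coloured `true`. A one-sided induced `F¹_{t,1}` with centres
`u, u' ∈ U` exists as soon as `N(u') ⊄ N(u)` and `|N(u) \ N(u')| ≥ t`. Forbidding it, a
`U`-vertex of degree at least `deg u' + t` contains `N(u')`, and `U`-vertices of equal degree
have neighbourhoods differing in at most `2t` vertices. Fix a representative `r d ∈ U` of every
degree `d` occurring in `U`. A vertex `u ∈ U` stores the at most `2t` vertices of
`N(u) ∆ N(r (deg u))`; a vertex `w ∉ U` stores the least degree `δ` of its neighbours and its
adjacency to `r δ, …, r (δ + t - 1)`. This determines its adjacency to every `r d`: it is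
adjacent to `r d` when `d ≥ δ + t`, and not when `d < δ`. Each label is a list of `O(t)` numbers
at most `n`, coded by iterated Cantor pairing into a number below `n ^ 2 ^ (2t + 4)`.
-/

open Finset
open scoped symmDiff

def listCode (l : List ℕ) : ℕ := l.foldr Nat.pair 0

def codeEntry (c i : ℕ) : ℕ := (Nat.unpair ((fun x => (Nat.unpair x).2)^[i] c)).1

@[simp] theorem codeEntry_listCode (l : List ℕ) (i : ℕ) :
    codeEntry (listCode l) i = l.getD i 0 := by
  induction l generalizing i with
  | nil =>
    have : ((fun x => (Nat.unpair x).2)^[i] 0) = 0 := Function.iterate_fixed (by simp) i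
    simp [codeEntry, listCode, this]
  | cons a l ih =>
    cases i with
    | zero => simp [codeEntry, listCode]
    | succ i => simpa [codeEntry, listCode, Function.iterate_succ_apply] using ih i

theorem listCode_lt_pow {M : ℕ} (hM : 0 < M) :
    ∀ {l : List ℕ} {k : ℕ}, (∀ x ∈ l, x < M) → l.length ≤ k → listCode l < M ^ 2 ^ k
  | [], _, _, _ => by simp [listCode]; positivity
  | a :: l, k + 1, hl, hk => by
    have hM' : M ≤ M ^ 2 ^ k := Nat.le_self_pow (by positivity) M
    have hmax : max a (listCode l) + 1 ≤ M ^ 2 ^ k :=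
      max_lt (lt_of_lt_of_le (hl a List.mem_cons_self) hM')
        (listCode_lt_pow hM (fun x hx => hl x (List.mem_cons_of_mem _ hx))
          (by simpa using hk))
    calc listCode (a :: l) < (max a (listCode l) + 1) ^ 2 := Nat.pair_lt_max_add_one_sq _ _
      _ ≤ (M ^ 2 ^ k) ^ 2 := Nat.pow_le_pow_left hmax 2
      _ = M ^ 2 ^ (k + 1) := by rw [← pow_mul, pow_succ]

theorem List.exists_getD_eq_iff_mem {α : Type*} {l : List α} {d x : α} (hx : x ≠ d) :
    (∃ i, l.getD i d = x) ↔ x ∈ l := by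
  refine ⟨fun ⟨i, hi⟩ => ?_, fun h => ?_⟩
  · rw [List.getD_eq_getElem?_getD] at hi
    cases h : l[i]? with
    | none => simp [h] at hi; exact absurd hi.symm hx
    | some y => simp only [h, Option.getD_some] at hi; exact hi ▸ List.mem_of_getElem? h
  · obtain ⟨i, hi, rfl⟩ := List.getElem_of_mem h
    exact ⟨i, List.getD_eq_getElem _ _ hi⟩

namespace F1tp

variable {t p : ℕ}

@[simp] lemma adj_inl_inr {a : Fin 2} {b : Fin (t + p)} :
    (F1tp t p).Adj (.inl a) (.inr b) ↔ a = 0 ∧ (b : ℕ) < t ∨ a = 1 ∧ t ≤ b := by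
  simp [F1tp]

@[simp] lemma not_adj_inl_inl {a a' : Fin 2} : ¬ (F1tp t p).Adj (.inl a) (.inl a') := by
  simp [F1tp]

@[simp] lemma not_adj_inr_inr {b b' : Fin (t + p)} : ¬ (F1tp t p).Adj (.inr b) (.inr b') := by
  simp [F1tp]

end F1tp

section OneSidedCopy

variable {V : Type*} {G : SimpleGraph V}

def OneSidedF1Free (C : G.Coloring Bool) (t : ℕ) : Prop :=
  ¬ ∃ f : F1tp t 1 ↪g G, C (f (.inl 0)) = true ∧ C (f (.inl 1)) = true

variable (C : G.Coloring Bool) {t : ℕ}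

theorem exists_F1tp_embedding {u u' w' : V} (e : Fin t ↪ V) (hu : C u = true)
    (hu' : C u' = true) (he : ∀ i, G.Adj u (e i) ∧ ¬ G.Adj u' (e i))
    (hw' : G.Adj u' w' ∧ ¬ G.Adj u w') :
    ∃ f : F1tp t 1 ↪g G, f (.inl 0) = u ∧ f (.inl 1) = u' := by
  have he' : ∀ i, C (e i) = false := fun i => by
    simpa [hu] using (C.valid (he i).1).symm
  have hw'C : C w' = false := by simpa [hu'] using (C.valid hw'.1).symm
  let leaves : Fin (t + 1) → V := Fin.snoc (α := fun _ => V) e w'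
  have hleaves : ∀ b, C (leaves b) = false := fun b => by
    induction b using Fin.lastCases <;> simp [leaves, he', hw'C]
  have hcenters : ∀ a, C (![u, u'] a) = true := by simp [Fin.forall_fin_two, hu, hu']
  let f := Sum.elim ![u, u'] leaves
  have hinj : Function.Injective f := by
    refine Function.Injective.sumElim ?_ (Fin.snoc_injective_of_injective e.injective ?_) ?_
    · exact injective_pair_iff_ne.2 (by rintro rfl; exact hw'.2 hw'.1)
    · rintro ⟨i, rfl⟩; exact hw'.2 (he i).1
    · intro a b h; simpa [hcenters, hleaves] using congrArg C h
  have hadj : ∀ a b, G.Adj (f (.inl a)) (f (.inr b)) ↔ (F1tp t 1).Adj (.inl a) (.inr b) := by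
    intro a b
    induction b using Fin.lastCases <;> fin_cases a <;> simp [f, leaves, he, hw']
  refine ⟨⟨⟨f, hinj⟩, ?_⟩, rfl, rfl⟩
  rintro (a | b) (a' | b')
  · exact iff_of_false (fun h => C.valid h (by simp [f, hcenters])) (by simp)
  · exact hadj a b'
  · rw [G.adj_comm, (F1tp t 1).adj_comm]; exact hadj a' b
  · exact iff_of_false (fun h => C.valid h (by simp [f, hleaves])) (by simp)

variable [Fintype V] [DecidableEq V] [DecidableRel G.Adj]

theorem card_neighborFinset_sdiff_lt (hF : OneSidedF1Free C t) {u u' : V}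
    (hu : C u = true) (hu' : C u' = true)
    (h : ¬ G.neighborFinset u' ⊆ G.neighborFinset u) :
    #(G.neighborFinset u \ G.neighborFinset u') < t := by
  by_contra! ht
  set S := G.neighborFinset u \ G.neighborFinset u'
  let e : Fin t ↪ V :=
    (Fin.castLEEmb ht).trans (S.equivFin.symm.toEmbedding.trans (Function.Embedding.subtype _))
  obtain ⟨w', hw'u', hw'u⟩ := Finset.not_subset.1 h
  have he : ∀ i, G.Adj u (e i) ∧ ¬ G.Adj u' (e i) := fun i => by
    have := (S.equivFin.symm (Fin.castLE ht i)).2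
    simp only [S, Finset.mem_sdiff, mem_neighborFinset] at this
    exact this
  obtain ⟨f, hf0, hf1⟩ := exists_F1tp_embedding C e hu hu' he
    ⟨by simpa using hw'u', by simpa using hw'u⟩
  exact hF ⟨f, by rw [hf0, hu], by rw [hf1, hu']⟩

theorem neighborFinset_subset_of_degree_add_le (hF : OneSidedF1Free C t) {u u' : V}
    (hu : C u = true) (hu' : C u' = true) (h : G.degree u' + t ≤ G.degree u) :
    G.neighborFinset u' ⊆ G.neighborFinset u := by
  by_contra hsub
  have hsdiff := card_neighborFinset_sdiff_lt C hF hu hu' hsub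
  have := card_le_card_sdiff_add_card (s := G.neighborFinset u) (t := G.neighborFinset u')
  rw [card_neighborFinset_eq_degree, card_neighborFinset_eq_degree] at this
  omega

theorem card_neighborFinset_sdiff_le_of_degree_eq (hF : OneSidedF1Free C t) {u u' : V}
    (hu : C u = true) (hu' : C u' = true) (h : G.degree u = G.degree u') :
    #(G.neighborFinset u \ G.neighborFinset u') ≤ t := by
  by_cases hsub : G.neighborFinset u' ⊆ G.neighborFinset u
  · have : G.neighborFinset u' = G.neighborFinset u :=
      eq_of_subset_of_card_le hsub (by simp [h])
    simp [this]
  · exact (card_neighborFinset_sdiff_lt C hF hu hu' hsub).le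

theorem card_symmDiff_neighborFinset_le (hF : OneSidedF1Free C t) {u u' : V}
    (hu : C u = true) (hu' : C u' = true) (h : G.degree u = G.degree u') :
    #(G.neighborFinset u ∆ G.neighborFinset u') ≤ 2 * t :=
  calc #(G.neighborFinset u ∆ G.neighborFinset u')
      ≤ #(G.neighborFinset u \ G.neighborFinset u') +
          #(G.neighborFinset u' \ G.neighborFinset u) := by
        rw [symmDiff_def]; exact card_union_le _ _
    _ ≤ 2 * t := by
        have := card_neighborFinset_sdiff_le_of_degree_eq C hF hu hu' h
        have := card_neighborFinset_sdiff_le_of_degree_eq C hF hu' hu h.symm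
        omega

end OneSidedCopy

section MinNeighborDegree

variable {V : Type*} (G : SimpleGraph V) [Fintype V] [DecidableRel G.Adj]

/-- An isolated vertex gets `Fintype.card V`, which exceeds every degree. -/
def minNeighborDegree (w : V) : ℕ :=
  (insert (Fintype.card V) ((G.neighborFinset w).image fun u => G.degree u)).min'
    (insert_nonempty _ _)

variable {G}

theorem minNeighborDegree_le_degree {w u : V} (h : G.Adj w u) :
    minNeighborDegree G w ≤ G.degree u :=
  min'_le _ _ (mem_insert_of_mem (mem_image_of_mem _ ((mem_neighborFinset G w u).2 h)))

theorem minNeighborDegree_le_card (w : V) : minNeighborDegree G w ≤ Fintype.card V :=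
  min'_le _ _ (mem_insert_self _ _)

theorem exists_adj_degree_eq_minNeighborDegree {w : V}
    (h : minNeighborDegree G w < Fintype.card V) :
    ∃ u, G.Adj w u ∧ G.degree u = minNeighborDegree G w := by
  have hmem := min'_mem (insert (Fintype.card V) ((G.neighborFinset w).image fun u => G.degree u))
    (insert_nonempty _ _)
  rw [← minNeighborDegree, mem_insert, mem_image] at hmem
  rcases hmem with hcard | ⟨u, hu, hdeg⟩
  · omega
  · exact ⟨u, (mem_neighborFinset G w u).1 hu, hdeg⟩

theorem adj_of_minNeighborDegree_add_le (C : G.Coloring Bool) {t : ℕ} (hF : OneSidedF1Free C t)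
    {r w : V} (hr : C r = true) (hw : C w = false)
    (h : minNeighborDegree G w + t ≤ G.degree r) : G.Adj r w := by
  classical
  obtain ⟨u', hwu', hdeg⟩ := exists_adj_degree_eq_minNeighborDegree (G := G) (w := w)
    (lt_of_le_of_lt (by omega) (G.degree_lt_card_verts r))
  have hu' : C u' = true := by simpa [hw] using C.valid hwu'
  have hsub := neighborFinset_subset_of_degree_add_le C hF hr hu' (hdeg ▸ h)
  simpa using hsub ((mem_neighborFinset G u' w).2 hwu'.symm)

end MinNeighborDegree

section Labeling

variable {n : ℕ} {G : SimpleGraph (Fin n)} [DecidableRel G.Adj] (C : G.Coloring Bool) (t : ℕ)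
  (r : ℕ → Fin n)

variable (G) in
def adjBits (w : Fin n) : List ℕ :=
  (List.range t).map fun j => if G.Adj (r (minNeighborDegree G w + j)) w then 1 else 0

/-- `r d` is meant to be a vertex coloured `true` of degree `d`. A `true` vertex `u` records
its degree and, shifted by one so that they differ from the padding `0`, the vertices where its
neighbourhood differs from that of `r (G.degree u)`. A `false` vertex `w` records
`minNeighborDegree G w` and its adjacency to the `t` following representatives. -/
noncomputable def labelList (v : Fin n) : List ℕ :=
  if C v then
    0 :: v :: G.degree v ::
      (G.neighborFinset v ∆ G.neighborFinset (r (G.degree v))).toList.map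
        fun x : Fin n => (x : ℕ) + 1
  else 1 :: v :: minNeighborDegree G v :: adjBits G t r v

noncomputable def label (v : Fin n) : ℕ := listCode (labelList C t r v)

/-- Decodes adjacency from the label `a` of a `true` vertex and the label `b` of a `false`
vertex. -/
def DecodesAdj (t a b : ℕ) : Prop :=
  codeEntry a 0 = 0 ∧ codeEntry b 0 = 1 ∧
    ((∃ i, codeEntry a (i + 3) = codeEntry b 1 + 1) ↔
      ¬ (codeEntry b 2 + t ≤ codeEntry a 2 ∨
          codeEntry b 2 ≤ codeEntry a 2 ∧ codeEntry b (codeEntry a 2 - codeEntry b 2 + 3) = 1))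

theorem codeEntry_label_zero (v : Fin n) :
    codeEntry (label C t r v) 0 = if C v then 0 else 1 := by
  by_cases hv : C v <;> simp [label, labelList, hv]

theorem codeEntry_label_one (v : Fin n) : codeEntry (label C t r v) 1 = v := by
  by_cases hv : C v <;> simp [label, labelList, hv]

theorem label_injective : Function.Injective (label C t r) := fun v w h =>
  Fin.ext (by simpa only [codeEntry_label_one] using congrArg (codeEntry · 1) h)

theorem adj_iff_adjBits (hF : OneSidedF1Free C t) {d : ℕ} (hr : C (r d) = true)
    (hrd : G.degree (r d) = d) {w : Fin n} (hw : C w = false) :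
    G.Adj (r d) w ↔ minNeighborDegree G w + t ≤ d ∨
      minNeighborDegree G w ≤ d ∧ (adjBits G t r w).getD (d - minNeighborDegree G w) 0 = 1 := by
  by_cases hfar : minNeighborDegree G w + t ≤ d
  · exact iff_of_true (adj_of_minNeighborDegree_add_le C hF hr hw (by rwa [hrd])) (.inl hfar)
  by_cases hnear : minNeighborDegree G w ≤ d
  · have hd : minNeighborDegree G w + (d - minNeighborDegree G w) = d := by omega
    have hj : d - minNeighborDegree G w < t := by omega
    simp [hfar, hnear, adjBits, List.getD_eq_getElem?_getD, hd, hj]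
  · refine iff_of_false (fun hadj => hnear ?_) (by simp [hfar, hnear])
    exact hrd ▸ minNeighborDegree_le_degree hadj.symm

theorem decodesAdj_label_iff (hF : OneSidedF1Free C t)
    (hr : ∀ u, C u = true →
      C (r (G.degree u)) = true ∧ G.degree (r (G.degree u)) = G.degree u)
    {u w : Fin n} (hu : C u = true) (hw : C w = false) :
    DecodesAdj t (label C t r u) (label C t r w) ↔ G.Adj u w := by
  obtain ⟨hrC, hrd⟩ := hr u hu
  have hmem : (∃ i, ((G.neighborFinset u ∆ G.neighborFinset (r (G.degree u))).toList.map
      (fun x : Fin n => (x : ℕ) + 1)).getD i 0 = w + 1) ↔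
      (G.Adj u w ↔ ¬ G.Adj (r (G.degree u)) w) := by
    rw [List.exists_getD_eq_iff_mem (by omega)]
    simp only [List.mem_map, mem_toList, mem_symmDiff, mem_neighborFinset,
      Nat.add_right_cancel_iff, Fin.val_inj, exists_eq_right]
    tauto
  simp only [DecodesAdj, label, labelList, hu, hw, if_true, Bool.false_eq_true, if_false,
    codeEntry_listCode, List.getD_cons_zero, List.getD_cons_succ, hmem,
    ← adj_iff_adjBits C t r hF hrC hrd hw, true_and]
  tauto

theorem adj_iff_decodesAdj_label (hF : OneSidedF1Free C t)
    (hr : ∀ u, C u = true →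
      C (r (G.degree u)) = true ∧ G.degree (r (G.degree u)) = G.degree u)
    (u v : Fin n) :
    G.Adj u v ↔ DecodesAdj t (label C t r u) (label C t r v) ∨
      DecodesAdj t (label C t r v) (label C t r u) := by
  have htag : ∀ a b, DecodesAdj t (label C t r a) (label C t r b) →
      C a = true ∧ C b = false := by
    intro a b ⟨h0, h1, _⟩
    rw [codeEntry_label_zero] at h0 h1
    cases ha : C a <;> cases hb : C b <;> simp_all
  by_cases huv : C u = true ∧ C v = false
  · rw [decodesAdj_label_iff C t r hF hr huv.1 huv.2]
    exact (or_iff_left fun h => by simpa [huv.1] using (htag v u h).2).symm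
  by_cases hvu : C v = true ∧ C u = false
  · rw [G.adj_comm, decodesAdj_label_iff C t r hF hr hvu.1 hvu.2]
    exact (or_iff_right fun h => by simpa [hvu.1] using (htag u v h).2).symm
  have hcol : C u = C v := by
    revert huv hvu; cases C u <;> cases C v <;> simp
  exact iff_of_false (fun h => C.valid h hcol)
    (by rintro (h | h); exacts [huv (htag u v h), hvu (htag v u h)])

theorem label_lt (hn : 2 ≤ n) (hF : OneSidedF1Free C t)
    (hr : ∀ u, C u = true →
      C (r (G.degree u)) = true ∧ G.degree (r (G.degree u)) = G.degree u)
    (v : Fin n) : label C t r v < n ^ 2 ^ (2 * t + 4) := by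
  have hdeg : ∀ u : Fin n, G.degree u < n := fun u => by
    simpa using G.degree_lt_card_verts u
  have hentries : ∀ x ∈ labelList C t r v, x < n + 1 := by
    intro x hx
    by_cases hv : C v <;> simp only [labelList, hv, if_true, Bool.false_eq_true, if_false,
      List.mem_cons, List.mem_map, adjBits, List.mem_range] at hx
    · rcases hx with rfl | rfl | rfl | ⟨y, -, rfl⟩ <;> grind [hdeg v]
    · rcases hx with rfl | rfl | rfl | ⟨j, -, rfl⟩
      · omega
      · omega
      · simpa [Nat.lt_succ_iff] using minNeighborDegree_le_card (G := G) v
      · split <;> omega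
  have hlength : (labelList C t r v).length ≤ 2 * t + 3 := by
    by_cases hv : C v
    · have := card_symmDiff_neighborFinset_le C hF hv (hr v hv).1 (hr v hv).2.symm
      simp only [labelList, hv, if_true, List.length_cons, List.length_map, length_toList]
      omega
    · simp only [labelList, hv, Bool.false_eq_true, if_false, List.length_cons, adjBits,
        List.length_map, List.length_range]
      omega
  calc label C t r v < (n + 1) ^ 2 ^ (2 * t + 3) := listCode_lt_pow (by omega) hentries hlength
    _ ≤ (n ^ 2) ^ 2 ^ (2 * t + 3) := Nat.pow_le_pow_left (by nlinarith) _
    _ = n ^ 2 ^ (2 * t + 4) := by rw [← pow_mul, ← pow_succ']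

end Labeling

theorem statement9_general (t : ℕ) :
    ∃ (c : ℕ) (D : ℕ → ℕ → Prop),
      ∀ n : ℕ, 2 ≤ n → ∀ (G : SimpleGraph (Fin n)) (side : Fin n → Bool),
        (∀ u v : Fin n, G.Adj u v → side u ≠ side v) →
        (¬ ∃ f : F1tp t 1 ↪g G,
          side (f (Sum.inl 0)) = true ∧ side (f (Sum.inl 1)) = true) →
        ∃ ℓ : Fin n → Fin (n ^ c), Function.Injective ℓ ∧
          ∀ u v : Fin n, u ≠ v → (G.Adj u v ↔ D (ℓ u).val (ℓ v).val) := by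
  classical
  refine ⟨2 ^ (2 * t + 4), fun a b => DecodesAdj t a b ∨ DecodesAdj t b a, ?_⟩
  intro n hn G side hbip hF
  let C : G.Coloring Bool := Coloring.mk side (hbip _ _)
  have : Nonempty (Fin n) := ⟨⟨0, by omega⟩⟩
  let r := Function.invFunOn (fun u => G.degree u) {u | C u = true}
  have hr (u : Fin n) (hu : C u = true) :
      C (r (G.degree u)) = true ∧ G.degree (r (G.degree u)) = G.degree u :=
    ⟨Function.invFunOn_mem (s := {u | C u = true}) (f := fun u => G.degree u) ⟨u, hu, rfl⟩,
      Function.invFunOn_eq (f := fun u => G.degree u) ⟨u, hu, rfl⟩⟩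
  exact ⟨fun v => ⟨label C t r v, label_lt C t r hn hF hr v⟩,
    fun v w h => label_injective C t r (congrArg Fin.val h),
    fun u v _ => adj_iff_decodesAdj_label C t r hF hr u v⟩

/-- Bipartite graphs (with a given bipartition `(U, W)`, encoded by `side` with
`U = side ⁻¹' {true}`) containing no one-sided induced copy of `F¹_{t,1}` with its star
centers in `U` admit an implicit representation. -/
theorem statement9 (t : ℕ) (ht : 1 ≤ t) :
    ∃ (c : ℕ) (D : ℕ → ℕ → Prop),
      ∀ n : ℕ, 2 ≤ n → ∀ (G : SimpleGraph (Fin n)) (side : Fin n → Bool),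
        (∀ u v : Fin n, G.Adj u v → side u ≠ side v) →
        (¬ ∃ f : F1tp t 1 ↪g G,
          side (f (Sum.inl 0)) = true ∧ side (f (Sum.inl 1)) = true) →
        ∃ ℓ : Fin n → Fin (n ^ c), Function.Injective ℓ ∧
          ∀ u v : Fin n, u ≠ v → (G.Adj u v ↔ D (ℓ u).val (ℓ v).val) :=
  statement9_general t
end

section
/- For every n ≥ 1, the number of simple graphs on the labeled vertex set {1, …, n} that are isomorphic to an induced subgraph of a hypercube Q_m for some m ≥ 1 is at most n^(2n). -/
/-!
Fix a spanning forest of `G` through a parent map `p` (roots are its fixed points) and, for an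
embedding `F` of `G` into a hypercube, call the coordinate in which `F u` and `F (p u)` differ the
direction of the tree edge `u — p u`. Naming every direction by a canonical vertex whose tree edge
has it gives a second map `c : V → V`. Inside a tree, `F v` differs from `F` of the root exactly in
the directions that occur an odd number of times on the path from `v` to the root, so `G` is
recovered from `(p, c)`: two vertices are adjacent iff they lie in the same tree and their label
parities differ in exactly one label. Hence there are at most `n ^ n * n ^ n` such graphs.
-/

open SimpleGraph

/-- The hypercube `Q_m`: vertices are `{0,1}^m`, two vertices adjacent iff they differ
in exactly one coordinate. -/
def hypercube (m : ℕ) : SimpleGraph (Fin m → Bool) :=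
  SimpleGraph.fromRel fun u v => ∃! i : Fin m, u i ≠ v i

open Finset Function

theorem hypercube_adj_iff {m : ℕ} {x y : Fin m → Bool} :
    (hypercube m).Adj x y ↔ hammingDist x y = 1 := by
  have h : (∃! i, x i ≠ y i) ↔ hammingDist x y = 1 := by
    simp [hammingDist, card_eq_one, eq_singleton_iff_unique_mem, ExistsUnique]
  simp only [hypercube, fromRel_adj, ne_comm (a := y _), or_self, h, and_iff_right_iff_imp]
  intro h1 rfl
  simp at h1

section OrbitXor

variable {V : Type*} (p : V → V)

def orbitXor (d : V → Bool) : ℕ → V → Bool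
  | 0, _ => false
  | k + 1, v => xor (d v) (orbitXor d k (p v))

variable {p}

theorem orbitXor_eq_xor_iterate {d a : V → Bool} (hd : ∀ u, d u = xor (a u) (a (p u)))
    (k : ℕ) (v : V) : orbitXor p d k v = xor (a v) (a (p^[k] v)) := by
  induction k generalizing v with
  | zero => simp [orbitXor]
  | succ k ih => rw [orbitXor, ih, hd, iterate_succ_apply, Bool.xor_assoc,
      ← Bool.xor_assoc (a (p v)), Bool.xor_self, Bool.false_xor]

end OrbitXor

section ParentMap

variable {V : Type*} {G : SimpleGraph V}

theorem SimpleGraph.Reachable.exists_adj_dist_lt {u r : V} (h : G.Reachable u r) (hne : u ≠ r) :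
    ∃ w, G.Adj u w ∧ G.dist w r < G.dist u r := by
  obtain ⟨q, hq⟩ := h.exists_walk_length_eq_dist
  cases q with
  | nil => exact absurd rfl hne
  | cons hadj q => exact ⟨_, hadj, (dist_le q).trans_lt (by simp [← hq])⟩

variable (G) in
theorem SimpleGraph.exists_parent_map [Fintype V] :
    ∃ p : V → V, (∀ v, p v ≠ v → G.Adj v (p v)) ∧
      ∀ v w, G.Reachable v w → p^[Fintype.card V] v = p^[Fintype.card V] w := by
  classical
  let r : V → V := fun v => (G.connectedComponentMk v).out
  have hr : ∀ v, G.Reachable v (r v) := fun v => ConnectedComponent.exact (Quot.out_eq _).symm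
  have hr_eq : ∀ {v w}, G.Reachable v w → r v = r w := fun h => by
    simp [r, ConnectedComponent.sound h]
  choose! q hqG hqr using fun v (hv : v ≠ r v) => (hr v).exists_adj_dist_lt hv
  let p v := if v = r v then v else q v
  have hp_root : ∀ v, v = r v → p v = v := fun v hv => if_pos hv
  have hp : ∀ v, v ≠ r v → G.Adj v (p v) ∧ r (p v) = r v ∧ G.dist (p v) (r v) < G.dist v (r v) :=
    fun v hv => by
      simp only [p, if_neg hv]
      exact ⟨hqG v hv, (hr_eq (hqG v hv).reachable).symm, hqr v hv⟩
  have hp_iterate : ∀ k v, G.dist v (r v) ≤ k → p^[k] v = r v := by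
    intro k
    induction k with
    | zero => intro v hv; simpa using ((hr v).dist_eq_zero_iff.1 (by omega))
    | succ k ih =>
      intro v hv
      by_cases hvr : v = r v
      · rw [iterate_fixed (hp_root v hvr), ← hvr]
      · obtain ⟨-, hroot, hdist⟩ := hp v hvr
        rw [iterate_succ_apply, ← hroot, ih (p v) (by rw [hroot]; omega)]
  have hdist : ∀ v, G.dist v (r v) ≤ Fintype.card V := fun v => by
    obtain ⟨q, hq, hlen⟩ := (hr v).exists_path_of_dist
    exact hlen ▸ hq.length_lt.le
  refine ⟨p, fun v hv => (hp v fun h => hv (hp_root v h)).1, fun v w h => ?_⟩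
  rw [hp_iterate _ v (hdist v), hp_iterate _ w (hdist w), hr_eq h]

end ParentMap

theorem hammingDist_eq_of_injOn {α β : Type*} [Fintype α] [Fintype β] [DecidableEq β]
    {g : α → β} {R : Set α} (hg : Set.InjOn g R) {x y : α → Bool} {a b : β → Bool}
    (hR : ∀ j ∈ R, (x j ≠ y j ↔ a (g j) ≠ b (g j))) (hxy : ∀ j ∉ R, x j = y j)
    (hab : ∀ i ∉ g '' R, a i = b i) :
    hammingDist a b = hammingDist x y := by
  have hsub : ∀ j, x j ≠ y j → j ∈ R := fun j h => by_contra fun hj => h (hxy j hj)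
  have himage : univ.filter (fun i => a i ≠ b i) = (univ.filter fun j => x j ≠ y j).image g := by
    ext i
    simp only [mem_filter, mem_univ, true_and, mem_image]
    constructor
    · intro hi
      obtain ⟨j, hj, rfl⟩ : i ∈ g '' R := by_contra fun hi' => hi (hab i hi')
      exact ⟨j, (hR j hj).2 hi, rfl⟩
    · rintro ⟨j, hj, rfl⟩
      exact (hR j (hsub j hj)).1 hj
  rw [hammingDist, hammingDist, himage, card_image_of_injOn]
  exact hg.mono fun j hj => hsub j (by simpa using hj)

theorem exists_fiber_rep {V ι : Type*} (κ : V → ι) :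
    ∃ c : V → V, (∀ u, κ (c u) = κ u) ∧ ∀ u u', κ u = κ u' → c u = c u' :=
  ⟨fun u => (Quotient.mk (Setoid.ker κ) u).out, fun u => Quotient.mk_out (s := Setoid.ker κ) u,
    fun _ _ h => congrArg Quotient.out (Quotient.sound h)⟩

section Decode

variable {V : Type*} [Fintype V] [DecidableEq V]

-- `p^[Fintype.card V] v` is the root of the tree of `v`, and `pathLabelParity p c v j` is the
-- parity of the number of tree edges labelled `j` on the path from `v` to it.
def pathLabelParity (p c : V → V) (v j : V) : Bool :=
  orbitXor p (fun u => decide (p u ≠ u ∧ c u = j)) (Fintype.card V) v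

def decodeGraph (p c : V → V) : SimpleGraph V where
  Adj v w := p^[Fintype.card V] v = p^[Fintype.card V] w ∧
    hammingDist (pathLabelParity p c v) (pathLabelParity p c w) = 1
  symm := ⟨fun _ _ h => ⟨h.1.symm, by rw [hammingDist_comm]; exact h.2⟩⟩
  loopless := ⟨fun _ h => by simp at h⟩

end Decode

section Encode

variable {V ι : Type*} [Fintype V] [DecidableEq V]
  {p c : V → V} {F : V → ι → Bool} {κ : V → ι}
  (hκ : ∀ u, p u ≠ u → ∀ i, F u i ≠ F (p u) i ↔ i = κ u)
  (hcκ : ∀ u, κ (c u) = κ u) (hc : ∀ u u', κ u = κ u' → c u = c u')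

include hcκ hc in
omit [Fintype V] [DecidableEq V] in
theorem injOn_range_rep : Set.InjOn κ (Set.range c) := by
  rintro _ ⟨u, rfl⟩ _ ⟨u', rfl⟩ h
  exact hc u u' (by rwa [hcκ, hcκ] at h)

include hκ hcκ hc in
theorem pathLabelParity_of_mem_range {j : V} (hj : j ∈ Set.range c) (v : V) :
    pathLabelParity p c v j = xor (F v (κ j)) (F (p^[Fintype.card V] v) (κ j)) := by
  unfold pathLabelParity
  refine orbitXor_eq_xor_iterate (a := (F · (κ j))) (fun u => ?_) _ v
  by_cases hu : p u = u
  · simp [hu]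
  · have hcu : c u = j ↔ κ j = κ u :=
      ⟨fun h => h ▸ hcκ u, fun h => injOn_range_rep hcκ hc ⟨u, rfl⟩ hj (by rw [hcκ, h])⟩
    simp only [hu, ne_eq, not_false_eq_true, true_and, hcu, ← hκ u hu]
    cases F u (κ j) <;> cases F (p u) (κ j) <;> simp

theorem pathLabelParity_of_not_mem_range {j : V} (hj : j ∉ Set.range c) (v : V) :
    pathLabelParity p c v j = false :=
  orbitXor_eq_xor_iterate (a := fun _ => false) (fun u => by simpa using fun _ h => hj ⟨u, h⟩) _ v

include hκ hcκ in
omit [Fintype V] [DecidableEq V] in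
theorem apply_iterate_eq_of_not_mem {i : ι} (hi : i ∉ κ '' Set.range c) (k : ℕ) (v : V) :
    F (p^[k] v) i = F v i := by
  suffices h : (F · i) ∘ p = (F · i) from congrFun (iterate_invariant h k) v
  funext u
  by_cases hu : p u = u
  · simp [hu]
  · by_contra h
    exact hi ⟨c u, ⟨u, rfl⟩, by rw [hcκ, eq_comm, ← hκ u hu]; exact Ne.symm h⟩

include hκ hcκ hc in
theorem hammingDist_pathLabelParity [Fintype ι] [DecidableEq ι] {v w : V}
    (hvw : p^[Fintype.card V] v = p^[Fintype.card V] w) :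
    hammingDist (F v) (F w) = hammingDist (pathLabelParity p c v) (pathLabelParity p c w) := by
  refine hammingDist_eq_of_injOn (injOn_range_rep hcκ hc) (fun j hj => ?_) (fun j hj => ?_)
    (fun i hi => ?_)
  · rw [pathLabelParity_of_mem_range hκ hcκ hc hj, pathLabelParity_of_mem_range hκ hcκ hc hj,
      hvw]
    simp
  · rw [pathLabelParity_of_not_mem_range hj, pathLabelParity_of_not_mem_range hj]
  · rw [← apply_iterate_eq_of_not_mem hκ hcκ hi, hvw, apply_iterate_eq_of_not_mem hκ hcκ hi]

end Encode

theorem exists_decodeGraph_eq {V ι : Type*} [Fintype V] [DecidableEq V] [Fintype ι]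
    [DecidableEq ι] [Nonempty ι] {G : SimpleGraph V} {F : V → ι → Bool}
    (hF : ∀ v w, G.Adj v w ↔ hammingDist (F v) (F w) = 1) :
    ∃ p c : V → V, decodeGraph p c = G := by
  obtain ⟨p, hpG, hpR⟩ := G.exists_parent_map
  have hdir : ∀ u, ∃ k, p u ≠ u → ∀ i, F u i ≠ F (p u) i ↔ i = k := fun u => by
    by_cases hu : p u = u
    · exact ⟨Classical.arbitrary ι, fun h => absurd hu h⟩
    · obtain ⟨k, hk⟩ := card_eq_one.1 ((hF u (p u)).1 (hpG u hu))
      exact ⟨k, fun _ i => by simpa using congrArg (i ∈ ·) hk⟩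
  choose κ hκ using hdir
  obtain ⟨c, hcκ, hc⟩ := exists_fiber_rep κ
  refine ⟨p, c, ?_⟩
  ext v w
  constructor
  · rintro ⟨hvw, h⟩
    rwa [hF, hammingDist_pathLabelParity hκ hcκ hc hvw]
  · intro h
    have hvw := hpR v w h.reachable
    exact ⟨hvw, by rwa [← hammingDist_pathLabelParity hκ hcκ hc hvw, ← hF]⟩

theorem statement14_general (n : ℕ) :
    Nat.card {G : SimpleGraph (Fin n) // ∃ m : ℕ, 1 ≤ m ∧ Nonempty (G ↪g hypercube m)}
      ≤ n ^ (2 * n) := by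
  let decodePair (pc : (Fin n → Fin n) × (Fin n → Fin n)) := decodeGraph pc.1 pc.2
  have hrange : {G | ∃ m : ℕ, 1 ≤ m ∧ Nonempty (G ↪g hypercube m)} ⊆ Set.range decodePair := by
    rintro G ⟨m, hm, ⟨F⟩⟩
    have : Nonempty (Fin m) := ⟨⟨0, hm⟩⟩
    obtain ⟨p, c, h⟩ :=
      exists_decodeGraph_eq fun v w => by rw [← hypercube_adj_iff, F.map_adj_iff]
    exact ⟨(p, c), h⟩
  calc _ ≤ Nat.card (Set.range decodePair) := Nat.card_mono (Set.toFinite _) hrange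
    _ ≤ Nat.card ((Fin n → Fin n) × (Fin n → Fin n)) := Finite.card_range_le _
    _ = n ^ (2 * n) := by simp [two_mul, pow_add]

/-- For every `n ≥ 1`, the number of labelled graphs on `{1, …, n}` that are isomorphic
to an induced subgraph of some hypercube `Q_m` is at most `n^(2n)`. -/
theorem statement14 (n : ℕ) (hn : 1 ≤ n) :
    Nat.card {G : SimpleGraph (Fin n) // ∃ m : ℕ, 1 ≤ m ∧ Nonempty (G ↪g hypercube m)}
      ≤ n ^ (2 * n) :=
  statement14_general n
end
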